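/- arXiv:1107.4113 — 9 statements merged into one kernel-verified Lean document; each statement's English description precedes it below -/
import Mathlib

section
/- Let 0 < λ < 1, p = λ/(1+λ), q = 1/(1+λ), and P(n) = A_n p^{n−1} q^n where A_n = (1/n)·C(2n−2, n−1). Then for every integer m ≥ 1 the m-th factorial moment of this distribution satisfies Σ_{n≥1} n(n−1)⋯(n−m+1) P(n) = 2^{m−1} (2m−3)!! λ^{m−1} / (1−λ)^{2m−1}, where (2m−3)!! = (2m−3)(2m−5)⋯3·1 and (−1)!! = 1. Consequently the m-th ordinary moment Σ_{n≥1} n^m P(n) is asymptotic to 2^{m−1} (2m−3)!! λ^{m−1} / (1−λ)^{2m−1} as λ → 1⁻. -/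
/-!
With `p = λ/(1+λ)` and `q = 1/(1+λ)`, the `(M+1)`-st factorial moment is
`q ∑ₙ n(n-1)⋯(n-M+1) C(2n,n) xⁿ` with `x = pq`, i.e. `q xᴹ` times the `M`-th derivative of
`∑ₙ C(2n,n) xⁿ = (1-4x)^(-1/2)`. That derivative is `4ᴹ (1/2)(3/2)⋯(M-1/2) (1-4x)^(-(M+1/2))`
(compared coefficientwise with the binomial series of `(1-y)^(-(M+1/2))`), and
`1 - 4pq = ((1-λ)/(1+λ))²`, which gives the closed form. Expanding `nᵐ` in falling factorials
with Stirling numbers of the second kind writes the ordinary moment as a combination of factorial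
moments of orders `≤ m`; only the top one, with coefficient `1`, has the maximal pole order
`2m - 1` at `λ = 1`.
-/

open Finset Polynomial Filter Topology
open scoped Nat

theorem Nat.mul_descFactorial_eq (a k : ℕ) :
    a * a.descFactorial k = a.descFactorial (k + 1) + k * a.descFactorial k := by
  rw [Nat.descFactorial_succ, ← add_mul]
  rcases le_or_gt k a with hk | hk
  · rw [Nat.sub_add_cancel hk]
  · simp [Nat.descFactorial_eq_zero_iff_lt.mpr hk]

theorem Nat.pow_eq_sum_stirlingSecond_mul_descFactorial (n a : ℕ) :
    a ^ n = ∑ k ∈ range (n + 1), n.stirlingSecond k * a.descFactorial k := by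
  induction n with
  | zero => simp
  | succ n ih =>
    have hsplit : ∑ k ∈ range (n + 2), (n + 1).stirlingSecond k * a.descFactorial k =
        ∑ k ∈ range (n + 1), n.stirlingSecond k * a.descFactorial (k + 1) +
          ∑ k ∈ range (n + 1), (k + 1) * n.stirlingSecond (k + 1) * a.descFactorial (k + 1) := by
      rw [sum_range_succ', ← sum_add_distrib]
      simp only [Nat.stirlingSecond_succ_succ, Nat.stirlingSecond_succ_zero, zero_mul, add_zero]
      exact sum_congr rfl fun k _ => by ring
    have hshift :
        ∑ k ∈ range (n + 1), (k + 1) * n.stirlingSecond (k + 1) * a.descFactorial (k + 1) =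
          ∑ k ∈ range (n + 1), k * n.stirlingSecond k * a.descFactorial k := by
      calc _ = ∑ k ∈ range (n + 2), k * n.stirlingSecond k * a.descFactorial k := by
            rw [sum_range_succ' (fun k => k * n.stirlingSecond k * a.descFactorial k) (n + 1)]
            simp
        _ = _ := by
            rw [sum_range_succ, Nat.stirlingSecond_eq_zero_of_lt (Nat.lt_succ_self n)]
            simp
    rw [hsplit, hshift, pow_succ, ih, sum_mul, ← sum_add_distrib]
    refine sum_congr rfl fun k _ => ?_
    rw [mul_assoc, mul_comm _ a, Nat.mul_descFactorial_eq]
    ring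

section HalfPochhammer

variable {K : Type*} [Field K] [CharZero K]

theorem Nat.cast_centralBinom_mul_factorial (n : ℕ) :
    (n.centralBinom * n ! : K) = 4 ^ n * (ascPochhammer K n).eval (1 / 2) := by
  induction n with
  | zero => simp
  | succ n ih =>
    have h : ((n + 1 : ℕ) : K) * (n + 1).centralBinom = 2 * (2 * n + 1) * n.centralBinom := by
      exact_mod_cast Nat.succ_mul_centralBinom_succ n
    rw [Nat.factorial_succ, ascPochhammer_succ_eval, pow_succ]
    push_cast at h ⊢
    linear_combination (n ! : K) * h + 2 * (2 * n + 1) * ih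

theorem ascPochhammer_eval_half_mul_two_pow (n : ℕ) :
    (ascPochhammer K n).eval (1 / 2) * 2 ^ n = (2 * n - 1)‼ := by
  induction n with
  | zero => simp
  | succ n ih =>
    rw [ascPochhammer_succ_eval, show 2 * (n + 1) - 1 = 2 * n + 1 by omega,
      Nat.doubleFactorial_add_one, pow_succ]
    push_cast
    linear_combination (2 * (n : K) + 1) * ih

end HalfPochhammer

theorem Ring.multichoose_add_natCast_mul_factorial {R : Type*} [CommRing R] [BinomialRing R]
    (a : R) (m k : ℕ) :
    Ring.multichoose (a + m) k * k ! * (ascPochhammer R m).eval a =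
      (ascPochhammer R (m + k)).eval a := by
  have h := Ring.factorial_nsmul_multichoose_eq_ascPochhammer (a + m) k
  rw [ascPochhammer_smeval_eq_eval, nsmul_eq_mul] at h
  rw [← ascPochhammer_mul, eval_mul, eval_comp, eval_add, eval_X, eval_natCast, ← h]
  ring

theorem Real.hasSum_multichoose_mul_pow (a : ℝ) {y : ℝ} (hy : |y| < 1) :
    HasSum (fun k => Ring.multichoose a k * y ^ k) (1 / (1 - y) ^ a) := by
  have h := (one_div_one_sub_rpow_hasFPowerSeriesOnBall_zero a).hasSum (y := y)
    (by simpa [enorm_eq_nnnorm, ← NNReal.coe_lt_coe] using hy)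
  simpa [FormalMultilinearSeries.ofScalars_apply_eq, Ring.multichoose_eq, mul_comm] using h

theorem Real.sq_rpow_natCast_add_half {t : ℝ} (ht : 0 ≤ t) (m : ℕ) :
    (t ^ 2) ^ ((m : ℝ) + 1 / 2) = t ^ (2 * m + 1) := by
  rw [← Real.rpow_natCast t 2, ← Real.rpow_mul ht, ← Real.rpow_natCast]
  push_cast
  ring_nf

theorem hasSum_descFactorial_mul_centralBinom_mul_pow (m : ℕ) {x : ℝ} (hx : |4 * x| < 1) :
    HasSum (fun n : ℕ => (n.descFactorial m : ℝ) * n.centralBinom * x ^ n)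
      ((4 * x) ^ m * (ascPochhammer ℝ m).eval (1 / 2) / (1 - 4 * x) ^ ((m : ℝ) + 1 / 2)) := by
  have hterm (k : ℕ) : ((k + m).descFactorial m : ℝ) * (k + m).centralBinom * x ^ (k + m) =
      (4 * x) ^ m * (ascPochhammer ℝ m).eval (1 / 2) *
        (Ring.multichoose (1 / 2 + m : ℝ) k * (4 * x) ^ k) := by
    have hdesc : ((k + m).descFactorial m * k ! : ℝ) = (k + m)! := by
      rw [mul_comm]
      exact_mod_cast Nat.add_sub_cancel k m ▸ Nat.factorial_mul_descFactorial (Nat.le_add_left m k)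
    refine mul_right_cancel₀ (Nat.cast_ne_zero.mpr k.factorial_ne_zero) ?_
    calc _ = ((k + m).centralBinom * (k + m)! : ℝ) * x ^ (k + m) := by
          rw [← hdesc]; ring
      _ = _ := by
          rw [add_comm k m, Nat.cast_centralBinom_mul_factorial,
            ← Ring.multichoose_add_natCast_mul_factorial]
          ring
  have hsum := (Real.hasSum_multichoose_mul_pow (1 / 2 + m) hx).mul_left
    ((4 * x) ^ m * (ascPochhammer ℝ m).eval (1 / 2))
  rw [← hasSum_nat_add_iff' m, sum_eq_zero fun n hn => by
    rw [Nat.descFactorial_eq_zero_iff_lt.mpr (mem_range.mp hn)]; simp, sub_zero, add_comm (m : ℝ),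
    div_eq_mul_one_div]
  simpa only [hterm] using hsum

/-- `busyPeriodProb lam n` is `P(n + 1)`, so that `n` runs over all of `ℕ`. -/
noncomputable def busyPeriodProb (lam : ℝ) (n : ℕ) : ℝ :=
  n.centralBinom / (n + 1) * (lam / (1 + lam)) ^ n * (1 / (1 + lam)) ^ (n + 1)

/-- The factorial moment of order `m + 1` (not `m`). -/
noncomputable def busyPeriodFactorialMoment (m : ℕ) (lam : ℝ) : ℝ :=
  2 ^ m * (2 * m - 1)‼ * lam ^ m / (1 - lam) ^ (2 * m + 1)

theorem hasSum_descFactorial_mul_busyPeriodProb (m : ℕ) {lam : ℝ} (h0 : 0 < lam) (h1 : lam < 1) :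
    HasSum (fun n : ℕ => ((n + 1).descFactorial (m + 1) : ℝ) * busyPeriodProb lam n)
      (busyPeriodFactorialMoment m lam) := by
  have hne : 1 + lam ≠ 0 := by linarith
  have hne' : 1 - lam ≠ 0 := by linarith
  set x := lam / (1 + lam) * (1 / (1 + lam))
  have hx4 : 4 * x = 4 * lam / (1 + lam) ^ 2 := by
    simp only [x]; field_simp
  have hx : |4 * x| < 1 := by
    rw [hx4, abs_of_pos (by positivity), div_lt_one (by positivity)]
    nlinarith
  have hgap : 1 - 4 * x = ((1 - lam) / (1 + lam)) ^ 2 := by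
    rw [hx4]; field_simp; ring
  have hterm (n : ℕ) : ((n + 1).descFactorial (m + 1) : ℝ) * busyPeriodProb lam n =
      1 / (1 + lam) * ((n.descFactorial m : ℝ) * n.centralBinom * x ^ n) := by
    have : (n : ℝ) + 1 ≠ 0 := by positivity
    rw [busyPeriodProb, Nat.succ_descFactorial_succ, mul_pow, pow_succ]
    push_cast
    field_simp
  have hval : 1 / (1 + lam) * ((4 * x) ^ m * (ascPochhammer ℝ m).eval (1 / 2) /
      ((1 - lam) / (1 + lam)) ^ (2 * m + 1)) =
      busyPeriodFactorialMoment m lam := by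
    rw [busyPeriodFactorialMoment, ← ascPochhammer_eval_half_mul_two_pow, show (4 : ℝ) = 2 * 2 by norm_num]
    simp only [x, div_eq_mul_inv, one_mul, mul_pow, inv_pow, pow_add]
    field_simp
    ring
  have hsum := (hasSum_descFactorial_mul_centralBinom_mul_pow m hx).mul_left (1 / (1 + lam))
  rw [hgap, Real.sq_rpow_natCast_add_half (by bound), hval] at hsum
  simpa only [hterm] using hsum

theorem hasSum_pow_mul_busyPeriodProb (m : ℕ) {lam : ℝ} (h0 : 0 < lam) (h1 : lam < 1) :
    HasSum (fun n : ℕ => ((n : ℝ) + 1) ^ (m + 1) * busyPeriodProb lam n)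
      (∑ i ∈ range (m + 1),
        ((m + 1).stirlingSecond (i + 1) : ℝ) * busyPeriodFactorialMoment i lam) := by
  have hpow (n : ℕ) : ((n : ℝ) + 1) ^ (m + 1) = ∑ i ∈ range (m + 1),
      ((m + 1).stirlingSecond (i + 1) : ℝ) * (n + 1).descFactorial (i + 1) := by
    rw [← Nat.cast_add_one, ← Nat.cast_pow, Nat.pow_eq_sum_stirlingSecond_mul_descFactorial,
      sum_range_succ']
    push_cast
    simp
  simp only [hpow, sum_mul]
  exact hasSum_sum fun i _ => by
    simpa only [mul_assoc] using (hasSum_descFactorial_mul_busyPeriodProb i h0 h1).mul_left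
      ((m + 1).stirlingSecond (i + 1) : ℝ)

theorem tendsto_sum_stirlingSecond_mul_busyPeriodFactorialMoment (m : ℕ) :
    Tendsto (fun lam : ℝ => (∑ i ∈ range (m + 1),
        ((m + 1).stirlingSecond (i + 1) : ℝ) * busyPeriodFactorialMoment i lam) *
          (1 - lam) ^ (2 * m + 1) /
        (2 ^ m * (2 * m - 1)‼ * lam ^ m)) (𝓝[≠] 1) (𝓝 1) := by
  set H : ℝ → ℝ := fun lam => (∑ i ∈ range (m + 1), ((m + 1).stirlingSecond (i + 1) : ℝ) *
      (2 ^ i * (2 * i - 1)‼ * lam ^ i * (1 - lam) ^ (2 * (m - i)))) /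
      (2 ^ m * (2 * m - 1)‼ * lam ^ m)
  have hH : ContinuousAt H 1 :=
    ContinuousAt.div (by fun_prop) (by fun_prop) (by positivity)
  have hH1 : H 1 = 1 := by
    simp only [H, sum_range_succ, sub_self, Nat.stirlingSecond_self, Nat.sub_self]
    rw [sum_eq_zero fun i hi => by
      rw [zero_pow (by have := mem_range.mp hi; omega), mul_zero, mul_zero]]
    have : (2 * m - 1)‼ ≠ 0 := (Nat.doubleFactorial_pos _).ne'
    simp [this]
  refine (hH1 ▸ hH.tendsto.mono_left nhdsWithin_le_nhds).congr' ?_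
  filter_upwards [self_mem_nhdsWithin] with lam hlam
  have hne : 1 - lam ≠ 0 := sub_ne_zero.mpr (Ne.symm hlam)
  simp only [H, busyPeriodFactorialMoment, sum_mul]
  congr 1
  refine sum_congr rfl fun i hi => ?_
  rw [show 2 * m + 1 = 2 * i + 1 + 2 * (m - i) by have := mem_range.mp hi; omega,
    pow_add (1 - lam) (2 * i + 1)]
  field_simp

/-- Factorial and ordinary moments of the Catalan distribution
`P(n) = A_n p^{n−1} q^n` of the busy-period size in `M/M/1`. -/
theorem stmt1 (m : ℕ) (hm : 1 ≤ m)
    (P : ℝ → ℕ → ℝ)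
    (hP : ∀ lam : ℝ, ∀ n : ℕ, 1 ≤ n →
      P lam n = ((Nat.choose (2 * n - 2) (n - 1) : ℝ) / n) *
        (lam / (1 + lam)) ^ (n - 1) * (1 / (1 + lam)) ^ n) :
    (∀ lam : ℝ, 0 < lam → lam < 1 →
      HasSum (fun n : ℕ => (∏ j ∈ Finset.range m, ((n : ℝ) + 1 - j)) * P lam (n + 1))
        (2 ^ (m - 1) * (Nat.doubleFactorial (2 * m - 3) : ℝ) * lam ^ (m - 1) /
          (1 - lam) ^ (2 * m - 1))) ∧
    Filter.Tendsto (fun lam : ℝ =>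
        (∑' n : ℕ, ((n : ℝ) + 1) ^ m * P lam (n + 1)) * (1 - lam) ^ (2 * m - 1) /
          (2 ^ (m - 1) * (Nat.doubleFactorial (2 * m - 3) : ℝ) * lam ^ (m - 1)))
      (nhdsWithin 1 (Set.Ioo 0 1)) (nhds 1) := by
  obtain ⟨m, rfl⟩ := Nat.exists_eq_add_of_le' hm
  have hPn (lam : ℝ) (n : ℕ) : P lam (n + 1) = busyPeriodProb lam n := by
    rw [hP lam (n + 1) (by omega), busyPeriodProb, Nat.centralBinom_eq_two_mul_choose,
      show 2 * (n + 1) - 2 = 2 * n by omega, Nat.add_sub_cancel]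
    push_cast
    ring
  have hprod (n : ℕ) : ∏ j ∈ range (m + 1), ((n : ℝ) + 1 - j) = (n + 1).descFactorial (m + 1) := by
    rw [← descPochhammer_eval_eq_descFactorial, descPochhammer_eval_eq_prod_range]
    push_cast
    rfl
  simp only [hPn, hprod, show 2 * (m + 1) - 3 = 2 * m - 1 by omega,
    show 2 * (m + 1) - 1 = 2 * m + 1 by omega, Nat.add_sub_cancel]
  refine ⟨fun lam h0 h1 => hasSum_descFactorial_mul_busyPeriodProb m h0 h1, ?_⟩
  refine ((tendsto_sum_stirlingSecond_mul_busyPeriodFactorialMoment m).mono_left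
    (nhdsWithin_mono _ fun lam hlam => hlam.2.ne)).congr' ?_
  filter_upwards [self_mem_nhdsWithin] with lam ⟨h0, h1⟩
  rw [(hasSum_pow_mul_busyPeriodProb m h0 h1).tsum_eq]
end

section
/- Let 0 < λ < 1 and define P(k) = (1−λ)λ^k/(1−λ^{k+1}) for integers k ≥ 0 (the tail probabilities Pr[K > k] of the maximum number K of customers present during an M/M/1 busy period), and T_l(λ) = Σ_{n≥1} n^l λ^n/(1−λ^n). Then for every integer m ≥ 1, the m-th moment of K, namely Σ_{k≥0} ((k+1)^m − k^m)·P(k), equals ((1−λ)/λ) · Σ_{l=0}^{m−1} C(m,l) (−1)^{m−1−l} T_l(λ). -/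
open Finset

/-!
Expanding `(k + 1) ^ m - k ^ m` binomially in powers of `k + 1` and writing
`λ ^ k = λ ^ (k + 1) / λ` turns the `k`-th term of the moment series into a fixed linear
combination of the `k`-th terms of `T_0, …, T_(m-1)`. Each `T_l` converges, being dominated by
`Σ (n + 1) ^ l λ ^ (n + 1) / (1 - λ)`, so the finite sum can be taken out of the series.
-/

theorem pow_sub_sub_one_pow_eq_sum {R : Type*} [CommRing R] (x : R) (m : ℕ) :
    x ^ m - (x - 1) ^ m = ∑ l ∈ range m, (m.choose l : R) * (-1) ^ (m - 1 - l) * x ^ l := by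
  rw [sub_pow, sum_range_succ, ← two_mul, pow_mul, neg_one_sq]
  simp only [one_pow, mul_one, one_mul, Nat.choose_self, Nat.cast_one, sub_add_cancel_right,
    ← sum_neg_distrib]
  refine sum_congr rfl fun l hl => ?_
  rw [show l + m = (m - 1 - l) + 2 * l + 1 by grind, pow_succ, pow_add, pow_mul,
    neg_one_sq, one_pow]
  ring

theorem summable_lambert_terms {lam : ℝ} (h0 : 0 ≤ lam) (h1 : lam < 1) (l : ℕ) :
    Summable fun n : ℕ => ((n : ℝ) + 1) ^ l * lam ^ (n + 1) / (1 - lam ^ (n + 1)) := by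
  have hgeom : Summable fun n : ℕ => ((n : ℝ) + 1) ^ l * lam ^ (n + 1) := by
    have := (summable_nat_add_iff 1).mpr
      (summable_pow_mul_geometric_of_norm_lt_one (R := ℝ) l (by rwa [Real.norm_of_nonneg h0]))
    exact_mod_cast this
  refine (hgeom.div_const (1 - lam)).of_nonneg_of_le (fun n => ?_) (fun n => ?_)
  · have := pow_le_one₀ (n := n + 1) h0 h1.le
    exact div_nonneg (by positivity) (by linarith)
  · have : lam ^ (n + 1) ≤ lam := pow_le_of_le_one h0 h1.le n.succ_ne_zero
    gcongr

theorem moment_term_eq_sum_lambert_terms {lam : ℝ} (hlam : lam ≠ 0) (m k : ℕ) :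
    (((k : ℝ) + 1) ^ m - (k : ℝ) ^ m) * ((1 - lam) * lam ^ k / (1 - lam ^ (k + 1)))
      = (1 - lam) / lam * ∑ l ∈ range m, (m.choose l : ℝ) * (-1) ^ (m - 1 - l) *
          (((k : ℝ) + 1) ^ l * lam ^ (k + 1) / (1 - lam ^ (k + 1))) := by
  have hdiff := pow_sub_sub_one_pow_eq_sum ((k : ℝ) + 1) m
  rw [add_sub_cancel_right] at hdiff
  simp only [hdiff, sum_mul, mul_sum]
  refine sum_congr rfl fun l _ => ?_
  rw [pow_succ]
  field_simp

theorem stmt2_general (lam : ℝ) (h0 : 0 < lam) (h1 : lam < 1) (m : ℕ) :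
    ∑' k : ℕ, (((k : ℝ) + 1) ^ m - (k : ℝ) ^ m) * ((1 - lam) * lam ^ k / (1 - lam ^ (k + 1)))
    = ((1 - lam) / lam) * ∑ l ∈ Finset.range m,
        (Nat.choose m l : ℝ) * (-1) ^ (m - 1 - l) *
          ∑' n : ℕ, ((n : ℝ) + 1) ^ l * lam ^ (n + 1) / (1 - lam ^ (n + 1)) := by
  simp_rw [moment_term_eq_sum_lambert_terms h0.ne', ← tsum_mul_left (a := (m.choose _ : ℝ) * _)]
  rw [tsum_mul_left,
    Summable.tsum_finsetSum fun l _ => (summable_lambert_terms h0.le h1 l).mul_left _]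

/-- The `m`-th moment of the maximum number `K` of customers present during an
`M/M/1` busy period, expressed via the Lambert-type sums `T_l(λ)`. -/
theorem stmt2 (lam : ℝ) (h0 : 0 < lam) (h1 : lam < 1) (m : ℕ) (hm : 1 ≤ m) :
    ∑' k : ℕ, (((k : ℝ) + 1) ^ m - (k : ℝ) ^ m) * ((1 - lam) * lam ^ k / (1 - lam ^ (k + 1)))
    = ((1 - lam) / lam) * ∑ l ∈ Finset.range m,
        (Nat.choose m l : ℝ) * (-1) ^ (m - 1 - l) *
          ∑' n : ℕ, ((n : ℝ) + 1) ^ l * lam ^ (n + 1) / (1 - lam ^ (n + 1)) :=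
  stmt2_general lam h0 h1 m
end

section
/- Let l ≥ 1 be an integer and 0 < λ < 1, and write h = −log λ. Then the improper integral I_l(λ) = ∫_1^∞ x^l λ^x/(1−λ^x) dx converges and equals Σ_{i=0}^{l} C(l,i) · (i!/h^{i+1}) · Li_{i+1}(λ), where Li_k(λ) = Σ_{n≥1} λ^n/n^k is the k-th polylogarithm. -/
/-!
Since `0 < λ^x < 1` for `x > 1`, the integrand is the geometric series `∑ₙ x^l (λ^x)^(n+1)`,
and `(λ^x)^(n+1) = e^{-(n+1)hx}`. Each term is integrated by shifting `[1, ∞)` to `[0, ∞)`,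
expanding `(x+1)^l` binomially and using `∫₀^∞ t^i e^{-at} dt = i!/a^(i+1)`; the factor
`1/((n+1)h)^(i+1)` together with `e^{-(n+1)h} = λ^(n+1)` produces the polylogarithm terms.
The terms are nonnegative with summable integrals, so the sum and the integral commute.
-/

open MeasureTheory Set Real
open scoped Nat

section ExpMoments

variable {a : ℝ}

theorem integral_pow_mul_exp_neg_mul_Ioi (ha : 0 < a) (i : ℕ) :
    ∫ t in Ioi 0, t ^ i * exp (-(a * t)) = i ! / a ^ (i + 1) := by
  have h := integral_rpow_mul_exp_neg_mul_Ioi (a := (i : ℝ) + 1) (by positivity) ha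
  simp_rw [add_sub_cancel_right, rpow_natCast] at h
  rw [h, Gamma_nat_eq_factorial, ← Nat.cast_add_one, rpow_natCast, one_div_pow,
    one_div_mul_eq_div]

theorem integrableOn_pow_mul_exp_neg_mul_Ioi (ha : 0 < a) (i : ℕ) :
    IntegrableOn (fun t ↦ t ^ i * exp (-(a * t))) (Ioi 0) :=
  .of_integral_ne_zero (by rw [integral_pow_mul_exp_neg_mul_Ioi ha]; positivity)

theorem setIntegral_Ioi_eq_comp_add (f : ℝ → ℝ) (c : ℝ) :
    ∫ x in Ioi c, f x = ∫ x in Ioi 0, f (x + c) := by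
  have hpre : (· + c) ⁻¹' Ioi c = Ioi 0 := by ext x; simp
  conv_lhs => rw [← map_add_right_eq_self volume c]
  rw [(measurableEmbedding_addRight c).setIntegral_map, hpre]

theorem integral_pow_mul_exp_neg_mul_Ioi_one (ha : 0 < a) (l : ℕ) :
    ∫ x in Ioi 1, x ^ l * exp (-(a * x))
      = ∑ i ∈ Finset.range (l + 1), (l.choose i : ℝ) * i ! / a ^ (i + 1) * exp (-a) := by
  have expand : ∀ x : ℝ, (x + 1) ^ l * exp (-(a * (x + 1)))
      = ∑ i ∈ Finset.range (l + 1), l.choose i * exp (-a) * (x ^ i * exp (-(a * x))) := by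
    intro x
    rw [add_pow, Finset.sum_mul, show -(a * (x + 1)) = -(a * x) + -a by ring]
    refine Finset.sum_congr rfl fun i _ ↦ ?_
    rw [exp_add]
    ring
  rw [setIntegral_Ioi_eq_comp_add, funext expand,
    integral_finsetSum _ fun i _ ↦ (integrableOn_pow_mul_exp_neg_mul_Ioi ha i).const_mul _]
  refine Finset.sum_congr rfl fun i _ ↦ ?_
  rw [integral_const_mul, integral_pow_mul_exp_neg_mul_Ioi ha]
  ring

end ExpMoments

theorem hasSum_mul_pow_succ (c : ℝ) {q : ℝ} (hq₀ : 0 ≤ q) (hq₁ : q < 1) :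
    HasSum (fun n : ℕ ↦ c * q ^ (n + 1)) (c * q / (1 - q)) := by
  simpa only [pow_succ', ← mul_assoc, div_eq_mul_inv] using
    (hasSum_geometric_of_lt_one hq₀ hq₁).mul_left (c * q)

theorem summable_pow_succ_div_natCast_add_one_pow {lam : ℝ} (h0 : 0 ≤ lam) (h1 : lam < 1)
    (k : ℕ) : Summable fun n : ℕ ↦ lam ^ (n + 1) / ((n : ℝ) + 1) ^ k := by
  refine .of_nonneg_of_le (fun n ↦ by positivity) (fun n ↦ div_le_self (by positivity)
    (one_le_pow₀ (by linarith [n.cast_nonneg (α := ℝ)]))) ?_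
  simpa only [pow_succ'] using (summable_geometric_of_lt_one h0 h1).mul_left lam

section Polylog

variable {lam : ℝ}

theorem rpow_pow_succ_eq_exp (h0 : 0 < lam) (n : ℕ) (x : ℝ) :
    (lam ^ x) ^ (n + 1) = exp (-(((n + 1) * -log lam) * x)) := by
  rw [← rpow_mul_natCast h0.le, rpow_def_of_pos h0]
  push_cast
  ring_nf

theorem integral_pow_mul_rpow_pow_succ_Ioi_one (h0 : 0 < lam) (h1 : lam < 1) (l n : ℕ) :
    ∫ x in Ioi 1, x ^ l * (lam ^ x) ^ (n + 1)
      = ∑ i ∈ Finset.range (l + 1), (l.choose i : ℝ) * i ! / (-log lam) ^ (i + 1) *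
          (lam ^ (n + 1) / ((n : ℝ) + 1) ^ (i + 1)) := by
  have ha : 0 < ((n : ℝ) + 1) * -log lam :=
    mul_pos (by positivity) (neg_pos.2 (log_neg h0 h1))
  have hexp : exp (-(((n : ℝ) + 1) * -log lam)) = lam ^ (n + 1) := by
    simpa using (rpow_pow_succ_eq_exp h0 n 1).symm
  simp_rw [rpow_pow_succ_eq_exp h0, integral_pow_mul_exp_neg_mul_Ioi_one ha, hexp]
  refine Finset.sum_congr rfl fun i _ ↦ ?_
  rw [mul_pow]
  field_simp

theorem integrableOn_pow_mul_rpow_pow_succ_Ioi_one (h0 : 0 < lam) (h1 : lam < 1) (l n : ℕ) :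
    IntegrableOn (fun x : ℝ ↦ x ^ l * (lam ^ x) ^ (n + 1)) (Ioi 1) := by
  have ha : 0 < ((n : ℝ) + 1) * -log lam :=
    mul_pos (by positivity) (neg_pos.2 (log_neg h0 h1))
  simp_rw [rpow_pow_succ_eq_exp h0]
  exact (integrableOn_pow_mul_exp_neg_mul_Ioi ha l).mono_set (Ioi_subset_Ioi zero_le_one)

theorem integrableOn_pow_mul_rpow_div_one_sub_rpow_Ioi_one (h0 : 0 < lam) (h1 : lam < 1)
    (l : ℕ) : IntegrableOn (fun x : ℝ ↦ x ^ l * lam ^ x / (1 - lam ^ x)) (Ioi 1) := by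
  have hcont : ContinuousOn (fun x : ℝ ↦ x ^ l * lam ^ x / (1 - lam ^ x)) (Ioi 1) := by
    have : Continuous (lam ^ · : ℝ → ℝ) :=
      continuous_const.rpow continuous_id fun _ ↦ .inl h0.ne'
    refine ContinuousOn.div (by fun_prop) (by fun_prop) fun x hx ↦ ?_
    exact (sub_pos.2 (rpow_lt_one h0.le h1 (zero_lt_one.trans hx))).ne'
  refine ((integrableOn_pow_mul_rpow_pow_succ_Ioi_one h0 h1 l 0).const_mul (1 - lam)⁻¹).mono'
    (hcont.aestronglyMeasurable measurableSet_Ioi) ?_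
  filter_upwards [ae_restrict_mem measurableSet_Ioi] with x (hx : 1 < x)
  have hx0 : 0 < x := zero_lt_one.trans hx
  have hle : lam ^ x ≤ lam := by
    simpa using rpow_le_rpow_of_exponent_ge h0 h1.le hx.le
  have hlt : lam ^ x < 1 := rpow_lt_one h0.le h1 hx0
  rw [norm_of_nonneg (div_nonneg (by positivity) (sub_nonneg.2 hlt.le)), zero_add, pow_one,
    div_eq_inv_mul]
  gcongr

end Polylog

theorem stmt5_general (l : ℕ) (lam : ℝ) (h0 : 0 < lam) (h1 : lam < 1) :
    IntegrableOn (fun x : ℝ => x ^ l * lam ^ x / (1 - lam ^ x)) (Set.Ioi 1) ∧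
    ∫ x in Set.Ioi (1 : ℝ), x ^ l * lam ^ x / (1 - lam ^ x)
      = ∑ i ∈ Finset.range (l + 1),
          (Nat.choose l i : ℝ) * (Nat.factorial i : ℝ) / (-Real.log lam) ^ (i + 1) *
            ∑' n : ℕ, lam ^ (n + 1) / ((n : ℝ) + 1) ^ (i + 1) := by
  have hpoly (i : ℕ) := summable_pow_succ_div_natCast_add_one_pow h0.le h1 (i + 1)
  have hseries : ∀ x ∈ Ioi (1 : ℝ),
      ∑' n : ℕ, x ^ l * (lam ^ x) ^ (n + 1) = x ^ l * lam ^ x / (1 - lam ^ x) :=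
    fun x hx ↦ (hasSum_mul_pow_succ _ (rpow_nonneg h0.le x)
      (rpow_lt_one h0.le h1 (zero_lt_one.trans hx))).tsum_eq
  have hnorm (n : ℕ) : ∫ x in Ioi 1, ‖x ^ l * (lam ^ x) ^ (n + 1)‖
      = ∫ x in Ioi 1, x ^ l * (lam ^ x) ^ (n + 1) :=
    setIntegral_congr_fun measurableSet_Ioi fun x (hx : 1 < x) ↦
      norm_of_nonneg (by have := zero_lt_one.trans hx; positivity)
  have hsum := hasSum_integral_of_summable_integral_norm
    (integrableOn_pow_mul_rpow_pow_succ_Ioi_one h0 h1 l) (by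
      simp_rw [hnorm, integral_pow_mul_rpow_pow_succ_Ioi_one h0 h1]
      exact summable_sum fun i _ ↦ (hpoly i).mul_left _)
  rw [setIntegral_congr_fun measurableSet_Ioi hseries] at hsum
  refine ⟨integrableOn_pow_mul_rpow_div_one_sub_rpow_Ioi_one h0 h1 l, hsum.unique ?_⟩
  simp_rw [integral_pow_mul_rpow_pow_succ_Ioi_one h0 h1]
  exact hasSum_sum fun i _ ↦ (hpoly i).hasSum.mul_left _

/-- For `l ≥ 1` and `0 < λ < 1`, the integral `I_l(λ) = ∫_1^∞ x^l λ^x/(1−λ^x) dx`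
converges and equals `Σ_{i=0}^{l} C(l,i)·(i!/h^{i+1})·Li_{i+1}(λ)`, with `h = −log λ`. -/
theorem stmt5 (l : ℕ) (hl : 1 ≤ l) (lam : ℝ) (h0 : 0 < lam) (h1 : lam < 1) :
    IntegrableOn (fun x : ℝ => x ^ l * lam ^ x / (1 - lam ^ x)) (Set.Ioi 1) ∧
    ∫ x in Set.Ioi (1 : ℝ), x ^ l * lam ^ x / (1 - lam ^ x)
      = ∑ i ∈ Finset.range (l + 1),
          (Nat.choose l i : ℝ) * (Nat.factorial i : ℝ) / (-Real.log lam) ^ (i + 1) *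
            ∑' n : ℕ, lam ^ (n + 1) / ((n : ℝ) + 1) ^ (i + 1) :=
  stmt5_general l lam h0 h1
end

section
/- Let l ≥ 1 be an integer and 0 < λ < 1, write h = −log λ, and set T_l(λ) = Σ_{n≥1} n^l λ^n/(1−λ^n) and I_l(λ) = ∫_1^∞ x^l λ^x/(1−λ^x) dx. Then |T_l(λ) − I_l(λ)| ≤ 2·l!/h^l. (This follows because the function f(x) = x^l λ^x/(1−λ^x) on [0,∞) increases to a single maximum and then decreases to 0, its total variation is twice its maximum, and its maximum is at most l!/h^l since e^y − 1 ≥ y^l/l! for y > 0.) -/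
/-!
With `h = -log λ`, both the summand (at `x = n + 1`) and the integrand are `f x = x^l / (e^{hx} - 1)`.
Since `e^y - 1 ≥ y^l / l!`, we have `0 ≤ f ≤ l!/h^l`. The sign of `f'(x)` is that of
`l (e^y - 1) - y e^y` at `y = hx`; this vanishes at `0`, increases up to `y = l - 1`, then decreases
and is negative at `y = l`, so `f` increases up to some `c` and decreases afterwards.
For a unimodal `f` with values in `[0, M]`, comparing the sum with the integral over unit intervals,
the errors telescope to at most `M` on each monotone stretch, and the unit interval containing the
peak costs at most another `M`.
-/

open MeasureTheory Real Set Filter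

section SumIntegral

variable {f : ℝ → ℝ}

theorem MonotoneOn.integral_le_sum_add {x₀ : ℝ} {n : ℕ} (hf : MonotoneOn f (Icc x₀ (x₀ + n))) :
    ∫ x in x₀..x₀ + n, f x ≤ (∑ i ∈ Finset.range n, f (x₀ + i)) + (f (x₀ + n) - f x₀) := by
  have htelescope := Finset.sum_range_sub (fun i : ℕ => f (x₀ + i)) n
  rw [Finset.sum_sub_distrib, Nat.cast_zero, add_zero] at htelescope
  have hshift : ∫ x in x₀..x₀ + n, f x ≤ ∑ i ∈ Finset.range n, f (x₀ + ↑(i + 1)) :=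
    hf.integral_le_sum
  linarith

theorem AntitoneOn.sum_le_integral_add {x₀ : ℝ} {n : ℕ} (hf : AntitoneOn f (Icc x₀ (x₀ + n))) :
    ∑ i ∈ Finset.range n, f (x₀ + i) ≤ (∫ x in x₀..x₀ + n, f x) + (f x₀ - f (x₀ + n)) := by
  have htelescope := Finset.sum_range_sub (fun i : ℕ => f (x₀ + i)) n
  rw [Finset.sum_sub_distrib, Nat.cast_zero, add_zero] at htelescope
  have hshift : ∑ i ∈ Finset.range n, f (x₀ + ↑(i + 1)) ≤ ∫ x in x₀..x₀ + n, f x :=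
    hf.sum_le_integral
  linarith

theorem abs_sum_sub_integral_le_of_monotoneOn_antitoneOn {a M : ℝ} {k n : ℕ}
    (hmono : MonotoneOn f (Icc a (a + k))) (hanti : AntitoneOn f (Ici (a + (k + 1))))
    (hmid : IntervalIntegrable f volume (a + k) (a + (k + 1)))
    (hf0 : ∀ x ∈ Ici a, 0 ≤ f x) (hfM : ∀ x ∈ Ici a, f x ≤ M) :
    |∑ i ∈ Finset.range (k + 1 + n), f (a + i) - ∫ x in a..a + ↑(k + 1 + n), f x| ≤ 2 * M := by
  have hk0 : (0 : ℝ) ≤ k := k.cast_nonneg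
  have hn0 : (0 : ℝ) ≤ n := n.cast_nonneg
  set b := a + (k + 1) with hb
  have hanti' : AntitoneOn f (Icc b (b + n)) := hanti.mono Icc_subset_Ici_self
  have hsplit_sum : ∑ i ∈ Finset.range (k + 1 + n), f (a + i) =
      ∑ i ∈ Finset.range k, f (a + i) + f (a + k) + ∑ i ∈ Finset.range n, f (b + i) := by
    rw [Finset.sum_range_add, Finset.sum_range_succ]
    congr 1
    refine Finset.sum_congr rfl fun i _ => congr_arg f ?_
    rw [hb]
    push_cast
    ring
  have hsplit_integral : ∫ x in a..a + ↑(k + 1 + n), f x =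
      (∫ x in a..a + k, f x) + (∫ x in a + k..b, f x) + ∫ x in b..b + n, f x := by
    have hk : IntervalIntegrable f volume a (a + k) :=
      (uIcc_of_le (le_add_of_nonneg_right hk0) ▸ hmono).intervalIntegrable
    have hn : IntervalIntegrable f volume b (b + n) :=
      (uIcc_of_le (le_add_of_nonneg_right hn0) ▸ hanti').intervalIntegrable
    rw [intervalIntegral.integral_add_adjacent_intervals hk hmid,
      intervalIntegral.integral_add_adjacent_intervals (hk.trans hmid) hn]
    rw [hb]
    push_cast
    ring_nf
  have hmid0 : 0 ≤ ∫ x in a + k..b, f x :=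
    intervalIntegral.integral_nonneg (by simp [b]) fun x hx =>
      hf0 x (le_trans (by simp) hx.1)
  have hmidM : ∫ x in a + k..b, f x ≤ M := by
    have := intervalIntegral.integral_mono_on (by simp [b]) hmid intervalIntegrable_const
      fun x hx => hfM x (le_trans (by simp) hx.1)
    simpa [b] using this
  have hak0 : 0 ≤ f (a + k) := hf0 _ (by simp)
  have hakM : f (a + k) ≤ M := hfM _ (by simp)
  have hbM : f b ≤ M := hfM _ (by rw [hb, mem_Ici]; linarith)
  have hbn0 : 0 ≤ f (b + n) := hf0 _ (by rw [hb, mem_Ici]; linarith)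
  have ha0 : 0 ≤ f a := hf0 _ self_mem_Ici
  have hmono_lower : ∑ i ∈ Finset.range k, f (a + i) ≤ ∫ x in a..a + k, f x :=
    hmono.sum_le_integral
  have hanti_upper : ∫ x in b..b + n, f x ≤ ∑ i ∈ Finset.range n, f (b + i) :=
    hanti'.integral_le_sum
  have hmono_upper := hmono.integral_le_sum_add
  have hanti_lower := hanti'.sum_le_integral_add
  rw [hsplit_sum, hsplit_integral, abs_le]
  constructor <;> linarith

theorem abs_tsum_sub_integral_le_of_monotoneOn_antitoneOn {a c M : ℝ}
    (hmono : MonotoneOn f (Icc a c)) (hanti : AntitoneOn f (Ici c ∩ Ici a))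
    (hf0 : ∀ x ∈ Ici a, 0 ≤ f x) (hfM : ∀ x ∈ Ici a, f x ≤ M)
    (hsum : Summable fun n : ℕ => f (a + n)) (hint : IntegrableOn f (Ioi a)) :
    |∑' n : ℕ, f (a + n) - ∫ x in Ioi a, f x| ≤ 2 * M := by
  set k := ⌊c - a⌋₊ with hk
  have hk0 : (0 : ℝ) ≤ k := k.cast_nonneg
  have hck : c < a + (k + 1) := by linarith [Nat.lt_floor_add_one (c - a)]
  have hmono' : MonotoneOn f (Icc a (a + k)) := by
    rcases le_total a c with hac | hca
    · exact hmono.mono (Icc_subset_Icc_right (by linarith [Nat.floor_le (sub_nonneg.2 hac)]))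
    · rw [hk, Nat.floor_eq_zero.2 (by linarith), Nat.cast_zero, add_zero, Icc_self]
      exact subsingleton_singleton.monotoneOn f
  have hanti' : AntitoneOn f (Ici (a + (k + 1))) :=
    hanti.mono fun x (hx : _ ≤ x) =>
      ⟨hck.le.trans hx, show a ≤ x by linarith⟩
  have hmid : IntervalIntegrable f volume (a + k) (a + (k + 1)) :=
    (intervalIntegrable_iff_integrableOn_Ioc_of_le (by linarith)).2
      (hint.mono_set (Ioc_subset_Ioi_self.trans (Ioi_subset_Ioi (by linarith))))
  have hS := hsum.hasSum.tendsto_sum_nat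
  have hJ := intervalIntegral_tendsto_integral_Ioi a hint
    (tendsto_atTop_add_const_left _ a tendsto_natCast_atTop_atTop)
  refine le_of_tendsto (hS.sub hJ).abs ?_
  filter_upwards [eventually_ge_atTop (k + 1)] with N hN
  obtain ⟨n, rfl⟩ := Nat.exists_eq_add_of_le hN
  exact abs_sum_sub_integral_le_of_monotoneOn_antitoneOn hmono' hanti' hmid hf0 hfM

end SumIntegral

theorem exists_nonneg_on_Icc_nonpos_on_Ici {g : ℝ → ℝ} {a L b : ℝ}
    (hg : ContinuousOn g (Icc L b)) (hmono : MonotoneOn g (Icc a L)) (hanti : AntitoneOn g (Ici L))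
    (haL : a ≤ L) (hLb : L ≤ b) (ha : 0 ≤ g a) (hb : g b ≤ 0) :
    ∃ y₀, (∀ y ∈ Icc a y₀, 0 ≤ g y) ∧ ∀ y ∈ Ici y₀, g y ≤ 0 := by
  have hL : 0 ≤ g L := ha.trans (hmono (left_mem_Icc.2 haL) (right_mem_Icc.2 haL) haL)
  obtain ⟨y₀, ⟨hLy₀, -⟩, hy₀⟩ := intermediate_value_Icc' hLb hg ⟨hb, hL⟩
  refine ⟨y₀, fun y hy => ?_, fun y hy => hy₀ ▸ hanti hLy₀ (hLy₀.trans hy) hy⟩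
  rcases le_total y L with hyL | hLy
  · exact ha.trans (hmono (left_mem_Icc.2 haL) ⟨hy.1, hyL⟩ hy.1)
  · exact hy₀ ▸ hanti hLy hLy₀ hy.2

theorem pow_div_factorial_le_exp_sub_one {y : ℝ} (hy : 0 ≤ y) {k : ℕ} (hk : k ≠ 0) :
    y ^ k / k.factorial ≤ exp y - 1 := by
  have hone : 1 ≤ ∑ i ∈ Finset.range k, y ^ i / i.factorial := by
    simpa using Finset.single_le_sum (f := fun i => y ^ i / i.factorial)
      (fun i _ => by positivity) (Finset.mem_range.2 (Nat.pos_of_ne_zero hk))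
  have := sum_le_exp_of_nonneg hy (k + 1)
  rw [Finset.sum_range_succ] at this
  linarith

theorem mul_exp_neg_div_one_sub_exp_neg (A t : ℝ) :
    A * exp (-t) / (1 - exp (-t)) = A / (exp t - 1) := by
  rw [exp_neg, show 1 - (exp t)⁻¹ = (exp t - 1) / exp t by field_simp, div_div_eq_mul_div,
    inv_mul_cancel_right₀ (exp_pos t).ne']

noncomputable def planck (l : ℕ) (h x : ℝ) : ℝ := x ^ l / (exp (h * x) - 1)

noncomputable def planckNumerator (l : ℕ) (y : ℝ) : ℝ := l * (exp y - 1) - y * exp y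

section Planck

variable {l : ℕ} {h : ℝ}

theorem mul_rpow_div_one_sub_rpow_eq_planck {lam : ℝ} (hlam : 0 < lam) (x : ℝ) :
    x ^ l * lam ^ x / (1 - lam ^ x) = planck l (-log lam) x := by
  rw [rpow_def_of_pos hlam, show log lam * x = -(-log lam * x) by ring,
    mul_exp_neg_div_one_sub_exp_neg, planck]

theorem exp_mul_sub_one_pos (hh : 0 < h) {x : ℝ} (hx : 0 < x) : 0 < exp (h * x) - 1 :=
  sub_pos.2 (one_lt_exp_iff.2 (mul_pos hh hx))

theorem planck_nonneg (hh : 0 ≤ h) {x : ℝ} (hx : 0 ≤ x) : 0 ≤ planck l h x :=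
  div_nonneg (pow_nonneg hx l) (sub_nonneg.2 (one_le_exp (mul_nonneg hh hx)))

theorem continuousOn_planck (hh : 0 < h) : ContinuousOn (planck l h) (Ioi 0) :=
  ((continuous_pow l).continuousOn).div (by fun_prop) fun _ hx => (exp_mul_sub_one_pos hh hx).ne'

theorem planck_le (hh : 0 < h) {x : ℝ} (hx : 0 < x) {k : ℕ} (hk : k ≠ 0) :
    planck l h x ≤ k.factorial / (h * x) ^ k * x ^ l := by
  calc planck l h x ≤ x ^ l / ((h * x) ^ k / k.factorial) :=
        div_le_div_of_nonneg_left (by positivity) (by positivity)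
          (pow_div_factorial_le_exp_sub_one (by positivity) hk)
    _ = k.factorial / (h * x) ^ k * x ^ l := by field_simp

theorem planck_le_factorial_div_pow (hl : l ≠ 0) (hh : 0 < h) {x : ℝ} (hx : 0 < x) :
    planck l h x ≤ l.factorial / h ^ l :=
  (planck_le hh hx hl).trans_eq (by field_simp; ring)

theorem planck_le_div_sq (hh : 0 < h) {x : ℝ} (hx : 0 < x) :
    planck l h x ≤ (l + 2).factorial / h ^ (l + 2) * x ^ (-2 : ℝ) :=
  (planck_le hh hx (k := l + 2) (by omega)).trans_eq (by
    rw [rpow_neg hx.le, rpow_two]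
    field_simp
    ring)

theorem integrableOn_planck_Ioi (hh : 0 < h) : IntegrableOn (planck l h) (Ioi 1) := by
  refine ((integrableOn_Ioi_rpow_of_lt (a := -2) (by norm_num) one_pos).const_mul
    ((l + 2).factorial / h ^ (l + 2))).mono'
    (((continuousOn_planck hh).mono (Ioi_subset_Ioi zero_le_one)).aestronglyMeasurable
      measurableSet_Ioi) ?_
  refine (ae_restrict_iff' measurableSet_Ioi).2 (ae_of_all _ fun x (hx : 1 < x) => ?_)
  rw [norm_of_nonneg (planck_nonneg hh.le (by linarith))]
  exact planck_le_div_sq hh (by linarith)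

theorem summable_planck_one_add (hh : 0 < h) : Summable fun n : ℕ => planck l h (1 + n) := by
  have hp : Summable fun n : ℕ => ((n + 1 : ℕ) : ℝ) ^ (-2 : ℝ) :=
    (summable_nat_add_iff 1).2 (summable_nat_rpow.2 (by norm_num))
  refine (hp.mul_left ((l + 2).factorial / h ^ (l + 2))).of_nonneg_of_le
    (fun n => planck_nonneg hh.le (by positivity)) fun n => ?_
  simpa [add_comm] using planck_le_div_sq (l := l) hh (x := 1 + n) (by positivity)

theorem hasDerivAt_planckNumerator (y : ℝ) :
    HasDerivAt (planckNumerator l) ((l - 1 - y) * exp y) y := by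
  have := (((hasDerivAt_exp y).sub_const 1).const_mul (l : ℝ)).sub
    ((hasDerivAt_id y).mul (hasDerivAt_exp y))
  exact this.congr_deriv (by simp only [id]; ring)

theorem exists_planckNumerator_sign_change (hl : l ≠ 0) :
    ∃ y₀, (∀ y ∈ Icc 0 y₀, 0 ≤ planckNumerator l y) ∧ ∀ y ∈ Ici y₀, planckNumerator l y ≤ 0 := by
  have hcont : Continuous (planckNumerator l) := by unfold planckNumerator; fun_prop
  have hl1 : (1 : ℝ) ≤ l := Nat.one_le_cast.2 (Nat.pos_of_ne_zero hl)
  refine exists_nonneg_on_Icc_nonpos_on_Ici (L := l - 1) (b := l) hcont.continuousOn ?_ ?_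
    (by linarith) (by linarith) (by simp [planckNumerator]) (by rw [planckNumerator]; linarith)
  · refine monotoneOn_of_hasDerivWithinAt_nonneg (convex_Icc _ _) hcont.continuousOn
      (fun y _ => (hasDerivAt_planckNumerator y).hasDerivWithinAt) fun y hy => ?_
    rw [interior_Icc] at hy
    exact mul_nonneg (by linarith [hy.2]) (exp_pos y).le
  · refine antitoneOn_of_hasDerivWithinAt_nonpos (convex_Ici _) hcont.continuousOn
      (fun y _ => (hasDerivAt_planckNumerator y).hasDerivWithinAt) fun y hy => ?_
    rw [interior_Ici] at hy
    exact mul_nonpos_of_nonpos_of_nonneg (by linarith [hy.out]) (exp_pos y).le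

theorem hasDerivAt_planck (hl : l ≠ 0) (hh : 0 < h) {x : ℝ} (hx : 0 < x) :
    HasDerivAt (planck l h)
      (x ^ (l - 1) * planckNumerator l (h * x) / (exp (h * x) - 1) ^ 2) x := by
  have hexp : HasDerivAt (fun x => exp (h * x) - 1) (exp (h * x) * h) x := by
    simpa using (((hasDerivAt_id x).const_mul h).exp).sub_const 1
  refine ((hasDerivAt_pow l x).div hexp (exp_mul_sub_one_pos hh hx).ne').congr_deriv ?_
  rw [planckNumerator, ← pow_sub_one_mul hl x]
  ring

theorem exists_monotoneOn_antitoneOn_planck (hl : l ≠ 0) (hh : 0 < h) :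
    ∃ c, MonotoneOn (planck l h) (Ioc 0 c) ∧ AntitoneOn (planck l h) (Ici c ∩ Ioi 0) := by
  obtain ⟨y₀, hpos, hneg⟩ := exists_planckNumerator_sign_change hl
  have hderiv {s : Set ℝ} (hs : s ⊆ Ioi 0) (x : ℝ) (hx : x ∈ s) :=
    (hasDerivAt_planck hl hh (hs hx)).hasDerivWithinAt (s := s)
  refine ⟨y₀ / h, ?_, ?_⟩
  · refine monotoneOn_of_hasDerivWithinAt_nonneg (convex_Ioc _ _)
      ((continuousOn_planck hh).mono Ioc_subset_Ioi_self)
      (hderiv (interior_subset.trans Ioc_subset_Ioi_self)) fun x hx => ?_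
    rw [interior_Ioc] at hx
    have hx0 := hx.1
    have hnum := hpos (h * x) ⟨by positivity, ((lt_div_iff₀' hh).1 hx.2).le⟩
    positivity
  · refine antitoneOn_of_hasDerivWithinAt_nonpos ((convex_Ici _).inter (convex_Ioi 0))
      ((continuousOn_planck hh).mono inter_subset_right)
      (hderiv (interior_subset.trans inter_subset_right)) fun x hx => ?_
    rw [interior_inter, interior_Ici, interior_Ioi] at hx
    refine div_nonpos_of_nonpos_of_nonneg (mul_nonpos_of_nonneg_of_nonpos
      (pow_nonneg hx.2.out.le _) (hneg _ ((div_lt_iff₀' hh).1 hx.1).le)) (sq_nonneg _)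

end Planck

/-- For `l ≥ 1` and `0 < λ < 1`, the sum `T_l(λ)` and the integral `I_l(λ)`
differ by at most `2·l!/h^l`, where `h = −log λ`. -/
theorem stmt6 (l : ℕ) (hl : 1 ≤ l) (lam : ℝ) (h0 : 0 < lam) (h1 : lam < 1) :
    |(∑' n : ℕ, ((n : ℝ) + 1) ^ l * lam ^ (n + 1) / (1 - lam ^ (n + 1)))
        - ∫ x in Set.Ioi (1 : ℝ), x ^ l * lam ^ x / (1 - lam ^ x)|
      ≤ 2 * (Nat.factorial l : ℝ) / (-Real.log lam) ^ l := by
  have hh : 0 < -log lam := neg_pos.2 (log_neg h0 h1)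
  have hl0 : l ≠ 0 := by omega
  have hterm (n : ℕ) : ((n : ℝ) + 1) ^ l * lam ^ (n + 1) / (1 - lam ^ (n + 1)) =
      planck l (-log lam) (1 + n) := by
    rw [← mul_rpow_div_one_sub_rpow_eq_planck h0, add_comm (1 : ℝ), ← Nat.cast_add_one,
      rpow_natCast]
  simp_rw [hterm, mul_rpow_div_one_sub_rpow_eq_planck h0, mul_div_assoc]
  obtain ⟨c, hmono, hanti⟩ := exists_monotoneOn_antitoneOn_planck hl0 hh
  exact abs_tsum_sub_integral_le_of_monotoneOn_antitoneOn
    (hmono.mono fun x hx => ⟨zero_lt_one.trans_le hx.1, hx.2⟩)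
    (hanti.mono fun x hx => ⟨hx.1, show 0 < x from zero_lt_one.trans_le hx.2⟩)
    (fun x hx => planck_nonneg hh.le (zero_le_one.trans hx))
    (fun x hx => planck_le_factorial_div_pow hl0 hh (zero_lt_one.trans_le hx))
    (summable_planck_one_add hh) (integrableOn_planck_Ioi hh)
end

section
/- Define T_0(λ) = Σ_{n≥1} λ^n/(1−λ^n) for 0 < λ < 1. Then as λ → 1⁻, T_0(λ) is asymptotic to (1/(1−λ))·log(1/(1−λ)); that is, the ratio T_0(λ)·(1−λ)/log(1/(1−λ)) tends to 1 as λ → 1⁻. -/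
open Filter Real Set Finset

private lemma term_pos {l : ℝ} (h0 : 0 < l) (h1 : l < 1) (n : ℕ) :
    0 < 1 - l ^ (n + 1) := by
  have : l ^ (n + 1) < 1 := pow_lt_one₀ h0.le h1 (Nat.succ_ne_zero n)
  linarith

private lemma summable_aux {l : ℝ} (h0 : 0 < l) (h1 : l < 1) :
    Summable (fun n : ℕ => l ^ (n + 1) / (1 - l ^ (n + 1))) := by
  have hgeo : Summable (fun n : ℕ => l ^ n * (l / (1 - l))) :=
    (summable_geometric_of_lt_one h0.le h1).mul_right _
  refine Summable.of_nonneg_of_le (fun n => ?_) (fun n => ?_) hgeo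
  · have := term_pos h0 h1 n
    positivity
  · have hp := term_pos h0 h1 n
    rw [← mul_div_assoc, mul_comm (l ^ n) l, ← pow_succ']
    have hle : l ^ (n + 1) ≤ l ^ 1 := pow_le_pow_of_le_one h0.le h1.le (by omega)
    rw [pow_one] at hle
    exact div_le_div_of_nonneg_left (by positivity) (by linarith) (by linarith)

private lemma lower_aux {l : ℝ} (h0 : 0 < l) (h1 : l < 1) :
    Real.log (1 / (1 - l)) ≤ (∑' n : ℕ, l ^ (n + 1) / (1 - l ^ (n + 1))) * (1 - l) := by
  have habs : |l| < 1 := by rw [abs_of_pos h0]; exact h1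
  have hl := hasSum_pow_div_log_of_abs_lt_one habs
  have hlog : Real.log (1 / (1 - l)) = -Real.log (1 - l) := by
    rw [one_div, Real.log_inv]
  rw [hlog, ← hl.tsum_eq, ← tsum_mul_right]
  refine Summable.tsum_le_tsum (fun n => ?_) hl.summable ((summable_aux h0 h1).mul_right _)
  have hp := term_pos h0 h1 n
  have hn1 : (0:ℝ) < (n:ℝ) + 1 := by positivity
  have hbern : 1 - (n+1 : ℝ) * (1 - l) ≤ l ^ (n+1) := by
    have h := one_add_mul_le_pow (a := -(1-l)) (by linarith) (n+1)
    have he : (1 + -(1-l)) = l := by ring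
    rw [he] at h
    push_cast at h ⊢
    linarith
  rw [div_mul_eq_mul_div, div_le_div_iff₀ hn1 hp]
  have hlp : (0:ℝ) ≤ l ^ (n+1) := by positivity
  nlinarith [hbern, hlp]

private lemma harmonic_sum_eq (N : ℕ) :
    (harmonic N : ℝ) = ∑ n ∈ Finset.range N, (1:ℝ) / (n + 1) := by
  induction N with
  | zero => simp
  | succ n ih =>
      rw [harmonic_succ, Finset.sum_range_succ, ← ih]
      push_cast
      rw [one_div]

private lemma upper_core {l : ℝ} (h0 : 0 < l) (h1 : l < 1) {N : ℕ} (hN1 : 1 ≤ N)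
    (hlN : l ^ N ≤ 1/2) :
    (∑' n : ℕ, l ^ (n + 1) / (1 - l ^ (n + 1))) * (1 - l) ≤
      2 + Real.log N := by
  have hμ0 : (0:ℝ) < 1 - l := by linarith
  have hb : Summable (fun n : ℕ => l ^ (n + 1) / (1 - l ^ (n + 1)) * (1 - l)) :=
    (summable_aux h0 h1).mul_right _
  rw [← tsum_mul_right, ← Summable.sum_add_tsum_nat_add N hb]
  have hhead : ∑ n ∈ Finset.range N, l ^ (n + 1) / (1 - l ^ (n + 1)) * (1 - l) ≤
      1 + Real.log N := by
    calc ∑ n ∈ Finset.range N, l ^ (n + 1) / (1 - l ^ (n + 1)) * (1 - l)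
        ≤ ∑ n ∈ Finset.range N, (1:ℝ) / (n + 1) := by
          refine Finset.sum_le_sum (fun n _ => ?_)
          have hp := term_pos h0 h1 n
          have hn1 : (0:ℝ) < (n:ℝ) + 1 := by positivity
          have hs : ((n:ℝ)+1) * l ^ (n+1) ≤ ∑ k ∈ Finset.range (n+1), l ^ k := by
            calc ((n:ℝ)+1) * l ^ (n+1) = ∑ _k ∈ Finset.range (n+1), l ^ (n+1) := by
                  rw [Finset.sum_const, Finset.card_range]; push_cast; ring
            _ ≤ _ := Finset.sum_le_sum (fun k hk =>
                pow_le_pow_of_le_one h0.le h1.le (by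
                  simp only [Finset.mem_range] at hk; omega))
          have hgs : 1 - l ^ (n+1) = (1 - l) * ∑ k ∈ Finset.range (n+1), l ^ k := by
            have h := geom_sum_mul l (n+1)
            linear_combination h
          rw [div_mul_eq_mul_div, div_le_div_iff₀ hp hn1, hgs]
          nlinarith [hs, hμ0.le, mul_le_mul_of_nonneg_left hs hμ0.le]
    _ = (harmonic N : ℝ) := (harmonic_sum_eq N).symm
    _ ≤ 1 + Real.log N := harmonic_le_one_add_log N
  have htail : (∑' n : ℕ, l ^ (n + N + 1) / (1 - l ^ (n + N + 1)) * (1 - l)) ≤ 1 := by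
    have hsum2 : Summable (fun n : ℕ => 2 * (1 - l) * l ^ (N+1) * l ^ n) :=
      (summable_geometric_of_lt_one h0.le h1).mul_left _
    have hle : ∀ n : ℕ, l ^ (n + N + 1) / (1 - l ^ (n + N + 1)) * (1 - l) ≤
        2 * (1 - l) * l ^ (N+1) * l ^ n := by
      intro n
      have hpow : l ^ (n + N + 1) ≤ l ^ N :=
        pow_le_pow_of_le_one h0.le h1.le (by omega)
      have hp : (0:ℝ) < 1 - l ^ (n + N + 1) := term_pos h0 h1 (n + N)
      have hhalf : (1:ℝ)/2 ≤ 1 - l ^ (n + N + 1) := by linarith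
      have h1' : l ^ (n + N + 1) / (1 - l ^ (n + N + 1)) ≤ 2 * l ^ (n + N + 1) := by
        rw [div_le_iff₀ hp]
        nlinarith [pow_nonneg h0.le (n + N + 1)]
      have heq : l ^ (n + N + 1) = l ^ (N + 1) * l ^ n := by
        rw [← pow_add]; ring_nf
      calc l ^ (n + N + 1) / (1 - l ^ (n + N + 1)) * (1 - l)
          ≤ 2 * l ^ (n + N + 1) * (1 - l) := by
            exact mul_le_mul_of_nonneg_right h1' hμ0.le
      _ = 2 * (1 - l) * l ^ (N+1) * l ^ n := by rw [heq]; ring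
    calc (∑' n : ℕ, l ^ (n + N + 1) / (1 - l ^ (n + N + 1)) * (1 - l))
        ≤ ∑' n : ℕ, 2 * (1 - l) * l ^ (N+1) * l ^ n :=
          Summable.tsum_le_tsum hle ((summable_nat_add_iff N).mpr hb) hsum2
    _ = 2 * (1 - l) * l ^ (N+1) * (1 - l)⁻¹ := by
          rw [tsum_mul_left, tsum_geometric_of_lt_one h0.le h1]
    _ = 2 * l ^ (N+1) := by field_simp
    _ ≤ 2 * l ^ N := by
          have : l ^ (N+1) ≤ l ^ N := pow_le_pow_of_le_one h0.le h1.le (by omega)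
          linarith
    _ ≤ 1 := by linarith
  linarith [hhead, htail]

private lemma upper_aux {l : ℝ} (h0 : 0 < l) (h1 : l < 1) :
    (∑' n : ℕ, l ^ (n + 1) / (1 - l ^ (n + 1))) * (1 - l) ≤
      Real.log (1 / (1 - l)) + 3 := by
  have hμ0 : (0:ℝ) < 1 - l := by linarith
  obtain ⟨N, hN1, hlN, hNle⟩ : ∃ N : ℕ, 1 ≤ N ∧ l ^ N ≤ 1/2 ∧ (N:ℝ) ≤ 2 / (1-l) := by
    refine ⟨⌈1/(1-l)⌉₊, ?_, ?_, ?_⟩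
    · exact Nat.one_le_iff_ne_zero.mpr (Nat.ceil_pos.mpr (by positivity)).ne'
    · have hNμ : 1 ≤ (1-l) * (⌈1/(1-l)⌉₊ : ℝ) := by
        have h := Nat.le_ceil (1/(1-l))
        calc (1:ℝ) = (1-l) * (1/(1-l)) := by field_simp
        _ ≤ _ := by gcongr
      have h2 : l ≤ Real.exp (-(1-l)) := by
        have := Real.add_one_le_exp (-(1-l))
        linarith
      calc l ^ ⌈1/(1-l)⌉₊ ≤ (Real.exp (-(1-l))) ^ ⌈1/(1-l)⌉₊ :=
            pow_le_pow_left₀ h0.le h2 _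
      _ = Real.exp (-((1-l) * ⌈1/(1-l)⌉₊)) := by rw [← Real.exp_nat_mul]; ring_nf
      _ ≤ Real.exp (-1) := by apply Real.exp_le_exp.mpr; linarith
      _ ≤ 1/2 := by
          rw [Real.exp_neg, inv_le_iff_one_le_mul₀ (Real.exp_pos 1)]
          nlinarith [Real.add_one_le_exp (1:ℝ)]
    · have h1' : (⌈1/(1-l)⌉₊ : ℝ) < 1/(1-l) + 1 := Nat.ceil_lt_add_one (by positivity)
      have h2 : (1:ℝ) ≤ 1/(1-l) := by rw [le_div_iff₀ hμ0]; linarith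
      have : 2 / (1-l) = 2 * (1/(1-l)) := by ring
      rw [this]
      linarith
  have hcore := upper_core h0 h1 hN1 hlN
  have hlogN : Real.log N ≤ Real.log (1 / (1-l)) + 1 := by
    calc Real.log N ≤ Real.log (2 / (1-l)) := by
          apply Real.log_le_log (by positivity) hNle
    _ = Real.log 2 + Real.log (1/(1-l)) := by
          rw [div_eq_mul_one_div, Real.log_mul (by norm_num) (by positivity)]
    _ ≤ Real.log (1/(1-l)) + 1 := by
          have := Real.log_two_lt_d9
          linarith
  linarith

/-- `T_0(λ) = Σ_{n≥1} λ^n/(1−λ^n)` is asymptotic to `(1/(1−λ))·log(1/(1−λ))`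
as `λ → 1⁻`. -/
theorem stmt7 :
    Filter.Tendsto (fun lam : ℝ =>
        (∑' n : ℕ, lam ^ (n + 1) / (1 - lam ^ (n + 1))) * (1 - lam) /
          Real.log (1 / (1 - lam)))
      (nhdsWithin 1 (Set.Ioo 0 1)) (nhds 1) := by
  have hL : Tendsto (fun l : ℝ => Real.log (1 / (1 - l)))
      (nhdsWithin 1 (Set.Ioo 0 1)) atTop := by
    have h1 : Tendsto (fun l : ℝ => 1 - l) (nhdsWithin 1 (Set.Ioo 0 1))
        (nhdsWithin 0 (Set.Ioi 0)) := by
      apply tendsto_nhdsWithin_of_tendsto_nhds_of_eventually_within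
      · have h : Tendsto (fun l : ℝ => 1 - l) (nhds 1) (nhds 0) := by
          have h0 : Continuous (fun l : ℝ => 1 - l) := by continuity
          simpa using h0.tendsto (1:ℝ)
        exact h.mono_left nhdsWithin_le_nhds
      · filter_upwards [self_mem_nhdsWithin] with l hl
        exact sub_pos.mpr hl.2
    have h2 : Tendsto (fun x : ℝ => 1 / x) (nhdsWithin 0 (Set.Ioi 0)) atTop := by
      simpa [one_div] using tendsto_inv_nhdsGT_zero
    exact Real.tendsto_log_atTop.comp (h2.comp h1)
  have hub : Tendsto (fun l : ℝ => 1 + 3 / Real.log (1 / (1 - l)))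
      (nhdsWithin 1 (Set.Ioo 0 1)) (nhds 1) := by
    have h3 : Tendsto (fun l : ℝ => 3 / Real.log (1 / (1 - l)))
        (nhdsWithin 1 (Set.Ioo 0 1)) (nhds 0) := tendsto_const_nhds.div_atTop hL
    simpa using tendsto_const_nhds.add h3
  have hposL : ∀ᶠ l in nhdsWithin (1:ℝ) (Set.Ioo 0 1),
      0 < Real.log (1 / (1 - l)) := by
    filter_upwards [self_mem_nhdsWithin] with l hl
    apply Real.log_pos
    rw [lt_div_iff₀ (by linarith [hl.2])]
    linarith [hl.1]
  refine tendsto_of_tendsto_of_tendsto_of_le_of_le' tendsto_const_nhds hub ?_ ?_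
  · filter_upwards [self_mem_nhdsWithin, hposL] with l hl hp
    rw [le_div_iff₀ hp, one_mul]
    exact lower_aux hl.1 hl.2
  · filter_upwards [self_mem_nhdsWithin, hposL] with l hl hp
    have hup := upper_aux hl.1 hl.2
    rw [div_le_iff₀ hp]
    calc (∑' n : ℕ, l ^ (n + 1) / (1 - l ^ (n + 1))) * (1 - l)
        ≤ Real.log (1 / (1 - l)) + 3 := hup
    _ = (1 + 3 / Real.log (1 / (1 - l))) * Real.log (1 / (1 - l)) := by
        field_simp
end

section
/- Let l ≥ 1 be an integer and define T_l(λ) = Σ_{n≥1} n^l λ^n/(1−λ^n) for 0 < λ < 1. Then as λ → 1⁻, T_l(λ) is asymptotic to l!·ζ(l+1)/(1−λ)^{l+1}; that is, (1−λ)^{l+1}·T_l(λ) tends to l!·ζ(l+1) as λ → 1⁻, where ζ denotes the Riemann zeta function. -/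
/-!
Expanding `λⁿ / (1 - λⁿ) = ∑_{k ≥ 1} λ^{kn}` turns the Lambert series into `∑_{k ≥ 1} S(λ^k)`,
where `S(x) = ∑_{n ≥ 1} n^l xⁿ`. Comparing `n^l` with `(n + 1) ⋯ (n + l) = l! (n+l choose l)`
squeezes `(1 - x)^{l+1} S(x)` between `l! x^{l+1}` and `l! x`, hence
`(1 - λ)^{l+1} S(λ^k) → l! / k^{l+1}` as `λ → 1⁻`. Tannery's theorem (dominated convergence for
series) sums these limits to `l! ζ(l+1)`. The domination `(1 - λ)^{l+1} S(λ^k) ≤ C / k^{l+1}`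
comes from `λ^k ≤ e^{-s}` and `1 - λ^k ≥ s / (1 + s)` for `s = k (1 - λ)`, together with the
boundedness of `e^{-s} (1 + s)^{l+1}`; it is summable in `k` because `l ≥ 1`.
-/

open Filter Set Topology Nat

/-- The polylogarithm `Li_{-l}(x) = ∑_{n ≥ 1} n^l xⁿ`. -/
noncomputable def polylogNeg (l : ℕ) (x : ℝ) : ℝ :=
  ∑' n : ℕ, ((n : ℝ) + 1) ^ l * x ^ (n + 1)

lemma summable_polylogNeg (l : ℕ) {x : ℝ} (hx : |x| < 1) :
    Summable fun n : ℕ => ((n : ℝ) + 1) ^ l * x ^ (n + 1) := by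
  have h := summable_pow_mul_geometric_of_norm_lt_one l (by rwa [Real.norm_eq_abs] : ‖x‖ < 1)
  refine ((summable_nat_add_iff 1).2 h).congr fun n => ?_
  push_cast
  ring

lemma polylogNeg_nonneg (l : ℕ) {x : ℝ} (hx : 0 ≤ x) : 0 ≤ polylogNeg l x :=
  tsum_nonneg fun _ => by positivity

lemma polylogNeg_le (l : ℕ) {x : ℝ} (hx₀ : 0 ≤ x) (hx₁ : x < 1) :
    polylogNeg l x ≤ l ! * x / (1 - x) ^ (l + 1) := by
  have hsum : HasSum (fun n : ℕ => (l ! * (n + l).choose l : ℝ) * x ^ (n + 1))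
      (l ! * x / (1 - x) ^ (l + 1)) := by
    have h := (hasSum_choose_mul_geometric_of_norm_lt_one l
      (by rwa [Real.norm_eq_abs, abs_of_nonneg hx₀])).mul_left ((l ! : ℝ) * x)
    rw [mul_one_div] at h
    exact h.congr_fun fun n => by ring
  refine Summable.tsum_le_tsum (fun n => ?_) (summable_polylogNeg l (by rwa [abs_of_nonneg hx₀]))
    hsum.summable |>.trans_eq hsum.tsum_eq
  gcongr
  exact_mod_cast (pow_succ_le_ascFactorial (n + 1) l).trans
    (ascFactorial_eq_factorial_mul_choose n l).le

lemma le_polylogNeg (l : ℕ) {x : ℝ} (hx₀ : 0 ≤ x) (hx₁ : x < 1) :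
    l ! * x ^ (l + 1) / (1 - x) ^ (l + 1) ≤ polylogNeg l x := by
  have hsum : HasSum (fun n : ℕ => (l ! * (n + l).choose l : ℝ) * x ^ (n + l + 1))
      (l ! * x ^ (l + 1) / (1 - x) ^ (l + 1)) := by
    have h := (hasSum_choose_mul_geometric_of_norm_lt_one l
      (by rwa [Real.norm_eq_abs, abs_of_nonneg hx₀])).mul_left ((l ! : ℝ) * x ^ (l + 1))
    rw [mul_one_div] at h
    exact h.congr_fun fun n => by ring
  have hS := summable_polylogNeg l (by rwa [abs_of_nonneg hx₀])
  -- the terms `n ≥ l` of the series dominate `l! (n+1) ⋯ (n+l) xⁿ⁺ˡ⁺¹`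
  calc l ! * x ^ (l + 1) / (1 - x) ^ (l + 1)
      ≤ ∑' n : ℕ, ((↑(n + l) : ℝ) + 1) ^ l * x ^ (n + l + 1) := by
        refine hsum.tsum_eq.symm.trans_le (Summable.tsum_le_tsum (fun n => ?_) hsum.summable
          ((summable_nat_add_iff l).2 hS))
        gcongr
        calc (l ! * (n + l).choose l : ℝ) = ((n + 1).ascFactorial l : ℕ) := by
              rw [ascFactorial_eq_factorial_mul_choose]; push_cast; ring
          _ ≤ ((n + l : ℕ) : ℝ) ^ l := by exact_mod_cast ascFactorial_le_pow_add n l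
          _ ≤ _ := by gcongr; linarith
    _ ≤ polylogNeg l x :=
        tsum_comp_le_tsum_of_inj hS (fun _ => by positivity) (add_left_injective l)

lemma tendsto_one_sub_pow_mul_polylogNeg (l : ℕ) :
    Tendsto (fun x => (1 - x) ^ (l + 1) * polylogNeg l x) (𝓝[<] 1) (𝓝 (l ! : ℝ)) := by
  have hlim (m : ℕ) : Tendsto (fun x : ℝ => l ! * x ^ m) (𝓝[<] 1) (𝓝 (l ! : ℝ)) :=
    ((by fun_prop : Continuous fun x : ℝ => (l ! : ℝ) * x ^ m).tendsto' 1 _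
      (by simp)).mono_left nhdsWithin_le_nhds
  refine tendsto_of_tendsto_of_tendsto_of_le_of_le' (hlim (l + 1)) (hlim 1) ?_ ?_ <;>
    filter_upwards [Ioo_mem_nhdsLT zero_lt_one] with x ⟨hx₀, hx₁⟩ <;>
    have hpos : 0 < (1 - x) ^ (l + 1) := pow_pos (by linarith) _
  · calc (l ! : ℝ) * x ^ (l + 1)
        = (1 - x) ^ (l + 1) * (l ! * x ^ (l + 1) / (1 - x) ^ (l + 1)) := by field_simp
      _ ≤ _ := by gcongr; exact le_polylogNeg l hx₀.le hx₁
  · calc (1 - x) ^ (l + 1) * polylogNeg l x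
        ≤ (1 - x) ^ (l + 1) * (l ! * x / (1 - x) ^ (l + 1)) := by
          gcongr; exact polylogNeg_le l hx₀.le hx₁
      _ = l ! * x ^ 1 := by field_simp

lemma tendsto_one_sub_pow_div_one_sub {𝕜 : Type*} [NontriviallyNormedField 𝕜] (K : ℕ) :
    Tendsto (fun x : 𝕜 => (1 - x ^ K) / (1 - x)) (𝓝[≠] 1) (𝓝 (K : 𝕜)) := by
  have h := hasDerivAt_iff_tendsto_slope.1 (hasDerivAt_pow K (1 : 𝕜))
  simp only [one_pow, mul_one] at h
  refine h.congr' (eventually_nhdsWithin_of_forall fun x hx => ?_)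
  have : x - 1 ≠ 0 := sub_ne_zero.2 hx
  rw [slope_def_field, one_pow, ← neg_sub, ← neg_sub 1 x, neg_div_neg_eq]

lemma tendsto_one_sub_pow_mul_polylogNeg_pow (l : ℕ) {K : ℕ} (hK : K ≠ 0) :
    Tendsto (fun x => (1 - x) ^ (l + 1) * polylogNeg l (x ^ K)) (𝓝[<] 1)
      (𝓝 (l ! / (K : ℝ) ^ (l + 1))) := by
  have hpow : Tendsto (fun x : ℝ => x ^ K) (𝓝[<] 1) (𝓝[<] 1) := by
    refine tendsto_nhdsWithin_iff.2 ⟨?_, ?_⟩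
    · simpa using ((continuous_pow K).tendsto (1 : ℝ)).mono_left nhdsWithin_le_nhds
    · filter_upwards [Ioo_mem_nhdsLT zero_lt_one] with x ⟨hx₀, hx₁⟩
      exact pow_lt_one₀ hx₀.le hx₁ hK
  have hratio := ((tendsto_one_sub_pow_div_one_sub (𝕜 := ℝ) K).mono_left
    (nhdsWithin_mono _ fun x (hx : x < 1) => hx.ne)).inv₀ (by exact_mod_cast hK)
  have hprod := (hratio.pow (l + 1)).mul ((tendsto_one_sub_pow_mul_polylogNeg l).comp hpow)
  rw [inv_pow, inv_mul_eq_div] at hprod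
  refine hprod.congr' ?_
  filter_upwards [Ioo_mem_nhdsLT zero_lt_one] with x ⟨hx₀, hx₁⟩
  have h₁ : 1 - x ≠ 0 := by linarith
  have h₂ : 1 - x ^ K ≠ 0 := by linarith [pow_lt_one₀ hx₀.le hx₁ hK]
  simp only [Function.comp_apply, inv_div, div_pow]
  field_simp

lemma exp_neg_mul_one_add_pow_le (n : ℕ) {s : ℝ} (hs : 0 ≤ s) :
    Real.exp (-s) * (1 + s) ^ n ≤ n ! * Real.exp 1 := by
  have h := Real.pow_div_factorial_le_exp (1 + s) (by linarith) n
  rw [div_le_iff₀ (by positivity), Real.exp_add] at h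
  calc Real.exp (-s) * (1 + s) ^ n ≤ Real.exp (-s) * (Real.exp 1 * Real.exp s * n !) := by gcongr
    _ = n ! * Real.exp 1 := by rw [Real.exp_neg]; field_simp

lemma one_sub_pow_mul_polylogNeg_pow_le (l : ℕ) {K : ℕ} (hK : K ≠ 0) {x : ℝ} (hx₀ : 0 ≤ x)
    (hx₁ : x < 1) :
    (1 - x) ^ (l + 1) * polylogNeg l (x ^ K) ≤ l ! * (l + 1)! * Real.exp 1 / (K : ℝ) ^ (l + 1) := by
  set s : ℝ := K * (1 - x) with hs
  have hKpos : (0 : ℝ) < K := by exact_mod_cast Nat.pos_of_ne_zero hK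
  have hs₀ : 0 < s := mul_pos hKpos (by linarith)
  have hpow_le : x ^ K ≤ Real.exp (-s) := by
    calc x ^ K ≤ Real.exp (-(1 - x)) ^ K := by
          gcongr; linarith [Real.add_one_le_exp (-(1 - x))]
      _ = Real.exp (-s) := by rw [← Real.exp_nat_mul, hs]; ring_nf
  have hone_sub : s / (1 + s) ≤ 1 - x ^ K := by
    have hexp : s + 1 ≤ Real.exp s := Real.add_one_le_exp s
    have : Real.exp (-s) * (1 + s) ≤ 1 := by
      rw [Real.exp_neg]; field_simp; linarith
    rw [div_le_iff₀ (by positivity)]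
    nlinarith
  calc (1 - x) ^ (l + 1) * polylogNeg l (x ^ K)
      ≤ (1 - x) ^ (l + 1) * (l ! * x ^ K / (1 - x ^ K) ^ (l + 1)) := by
        gcongr
        exact polylogNeg_le l (by positivity) (pow_lt_one₀ hx₀ hx₁ hK)
    _ ≤ (1 - x) ^ (l + 1) * (l ! * Real.exp (-s) / (s / (1 + s)) ^ (l + 1)) := by
        gcongr
    _ = l ! * (Real.exp (-s) * (1 + s) ^ (l + 1)) / (K : ℝ) ^ (l + 1) := by
        rw [show 1 - x = s / K by rw [hs]; field_simp, div_pow, div_pow]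
        field_simp
    _ ≤ l ! * ((l + 1)! * Real.exp 1) / (K : ℝ) ^ (l + 1) := by
        gcongr l ! * ?_ / _
        exact exp_neg_mul_one_add_pow_le (l + 1) hs₀.le
    _ = _ := by ring

lemma tsum_lambert_eq_tsum_polylogNeg (l : ℕ) {x : ℝ} (hx₀ : 0 ≤ x) (hx₁ : x < 1) :
    ∑' n : ℕ, ((n : ℝ) + 1) ^ l * x ^ (n + 1) / (1 - x ^ (n + 1))
      = ∑' k : ℕ, polylogNeg l (x ^ (k + 1)) := by
  set F : ℕ → ℕ → ℝ := fun n k => ((n : ℝ) + 1) ^ l * (x ^ (n + 1)) ^ (k + 1)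
  have hxn (n : ℕ) : x ^ (n + 1) < 1 := pow_lt_one₀ hx₀ hx₁ n.succ_ne_zero
  have hrow (n : ℕ) : HasSum (F n) (((n : ℝ) + 1) ^ l * x ^ (n + 1) / (1 - x ^ (n + 1))) := by
    have h := (hasSum_geometric_of_lt_one (by positivity) (hxn n)).mul_left
      (((n : ℝ) + 1) ^ l * x ^ (n + 1))
    rw [← div_eq_mul_inv] at h
    exact h.congr_fun fun k => by simp only [F]; ring
  -- `x ^ (n + 1) / (1 - x ^ (n + 1)) ≤ x ^ (n + 1) / (1 - x)`
  have hsum : Summable fun n : ℕ => ((n : ℝ) + 1) ^ l * x ^ (n + 1) / (1 - x ^ (n + 1)) := by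
    refine ((summable_polylogNeg l (by rwa [abs_of_nonneg hx₀])).div_const (1 - x)).of_nonneg_of_le
      (fun n => div_nonneg (by positivity) (by linarith [hxn n])) fun n => ?_
    gcongr
    exact pow_le_of_le_one hx₀ hx₁.le n.succ_ne_zero
  have hF : Summable (Function.uncurry F) :=
    (summable_prod_of_nonneg fun p => by simp only [Function.uncurry, F]; positivity).2
      ⟨fun n => (hrow n).summable, hsum.congr fun n => (hrow n).tsum_eq.symm⟩
  calc ∑' n : ℕ, ((n : ℝ) + 1) ^ l * x ^ (n + 1) / (1 - x ^ (n + 1))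
      = ∑' n, ∑' k, F n k := tsum_congr fun n => (hrow n).tsum_eq.symm
    _ = ∑' k, ∑' n, F n k := hF.tsum_comm.symm
    _ = ∑' k : ℕ, polylogNeg l (x ^ (k + 1)) := by
        refine tsum_congr fun k => tsum_congr fun n => ?_
        simp only [F, ← pow_mul, mul_comm]

/-- For `l ≥ 1`, `T_l(λ) = Σ_{n≥1} n^l λ^n/(1−λ^n)` is asymptotic to
`l!·ζ(l+1)/(1−λ)^{l+1}` as `λ → 1⁻`. -/
theorem stmt8 (l : ℕ) (hl : 1 ≤ l) :
    Filter.Tendsto (fun lam : ℝ =>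
        (1 - lam) ^ (l + 1) * ∑' n : ℕ, ((n : ℝ) + 1) ^ l * lam ^ (n + 1) / (1 - lam ^ (n + 1)))
      (nhdsWithin 1 (Set.Ioo 0 1))
      (nhds ((Nat.factorial l : ℝ) * ∑' n : ℕ, 1 / ((n : ℝ) + 1) ^ (l + 1))) := by
  have hzeta : Summable fun k : ℕ => 1 / ((k : ℝ) + 1) ^ (l + 1) := by
    exact_mod_cast (summable_nat_add_iff 1).2 (Real.summable_one_div_nat_pow.2 (by omega))
  have hK (k : ℕ) : ((k + 1 : ℕ) : ℝ) = k + 1 := by push_cast; ring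
  have hlim := tendsto_tsum_of_dominated_convergence (𝓕 := 𝓝[Ioo 0 1] 1)
    (f := fun x (k : ℕ) => (1 - x) ^ (l + 1) * polylogNeg l (x ^ (k + 1)))
    (g := fun k : ℕ => l ! / ((k : ℝ) + 1) ^ (l + 1))
    (hzeta.mul_left (l ! * (l + 1)! * Real.exp 1))
    (fun k => by
      rw [← hK]
      exact (tendsto_one_sub_pow_mul_polylogNeg_pow l k.succ_ne_zero).mono_left
        (nhdsWithin_mono _ Ioo_subset_Iio_self))
    (eventually_nhdsWithin_of_forall fun x ⟨hx₀, hx₁⟩ k => by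
      rw [Real.norm_of_nonneg (mul_nonneg (pow_pos (sub_pos.2 hx₁) _).le
        (polylogNeg_nonneg l (by positivity))), mul_one_div, ← hK]
      exact one_sub_pow_mul_polylogNeg_pow_le l k.succ_ne_zero hx₀.le hx₁)
  rw [← tsum_mul_left]
  simp only [mul_one_div]
  refine hlim.congr' (eventually_nhdsWithin_of_forall fun x ⟨hx₀, hx₁⟩ => ?_)
  dsimp only
  rw [tsum_lambert_eq_tsum_polylogNeg l hx₀.le hx₁, tsum_mul_left]
end

section
/- For 0 < λ < 1 let Ex[K] = Σ_{k≥0} (1−λ)λ^k/(1−λ^{k+1}) be the mean of the random variable K with tail distribution Pr[K > k] = (1−λ)λ^k/(1−λ^{k+1}). Then as λ → 1⁻, Ex[K] is asymptotic to log(1/(1−λ)); that is, Ex[K]/log(1/(1−λ)) → 1 as λ → 1⁻. -/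
/-! Writing `a k = (1-λ)λ^k/(1-λ^{k+1})`, one has `1 + λ a k = (1-λ^{k+2})/(1-λ^{k+1})`,
so `Σ log (1 + λ a k)` telescopes to `log (1/(1-λ))`. Since `x - x² ≤ log (1+x) ≤ x` for
`x ≥ 0` and `a k ≤ 1/(k+1)`, the sum `Σ a k` lies between `log (1/(1-λ))` and
`(log (1/(1-λ)) + Σ 1/(k+1)²) / λ`. -/

open Real Filter Topology

namespace MaxQueueLength

lemma hasSum_sub_of_monotone {g : ℕ → ℝ} {b : ℝ} (hg : Monotone g)
    (hb : Tendsto g atTop (𝓝 b)) :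
    HasSum (fun k => g (k + 1) - g k) (b - g 0) := by
  rw [hasSum_iff_tendsto_nat_of_nonneg (fun k => sub_nonneg.2 (hg k.le_succ))]
  simpa only [Finset.sum_range_sub] using hb.sub_const (g 0)

lemma sub_sq_le_log_one_add {x : ℝ} (hx : 0 ≤ x) : x - x ^ 2 ≤ log (1 + x) := by
  have h := one_sub_inv_le_log_of_pos (by linarith : 0 < 1 + x)
  have hinv : x - x ^ 2 ≤ 1 - (1 + x)⁻¹ := by
    rw [← sub_nonneg]
    have hdiff : 1 - (1 + x)⁻¹ - (x - x ^ 2) = x ^ 3 / (1 + x) := by field_simp; ring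
    rw [hdiff]; positivity
  linarith

lemma tendsto_div_of_le_of_mul_le {α : Type*} {F : Filter α} {S L r : α → ℝ} (C : ℝ)
    (hL : Tendsto L F atTop) (hr : Tendsto r F (𝓝 1))
    (hlow : ∀ᶠ x in F, L x ≤ S x) (hupp : ∀ᶠ x in F, r x * S x ≤ L x + C) :
    Tendsto (fun x => S x / L x) F (𝓝 1) := by
  have hbound : Tendsto (fun x => (1 + C / L x) / r x) F (𝓝 1) := by
    have hCL : Tendsto (fun x => C / L x) F (𝓝 0) := tendsto_const_nhds.div_atTop hL
    have h := (hCL.const_add 1).div hr one_ne_zero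
    rwa [add_zero, div_one] at h
  refine tendsto_of_tendsto_of_tendsto_of_le_of_le' tendsto_const_nhds hbound ?_ ?_
  · filter_upwards [hlow, hL.eventually_gt_atTop 0] with x hx hL0
    rwa [le_div_iff₀ hL0, one_mul]
  · filter_upwards [hupp, hL.eventually_gt_atTop 0, hr.eventually (lt_mem_nhds one_pos)]
      with x hx hL0 hr0
    rw [div_le_div_iff₀ hL0 hr0]
    calc S x * r x = r x * S x := mul_comm _ _
      _ ≤ L x + C := hx
      _ = (1 + C / L x) * L x := by field_simp

noncomputable def tailProb (l : ℝ) (k : ℕ) : ℝ := (1 - l) * l ^ k / (1 - l ^ (k + 1))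

section

variable {l : ℝ}

lemma one_sub_pow_pos (h0 : 0 ≤ l) (h1 : l < 1) {n : ℕ} (hn : n ≠ 0) : 0 < 1 - l ^ n :=
  sub_pos.2 (pow_lt_one₀ h0 h1 hn)

lemma tailProb_nonneg (h0 : 0 ≤ l) (h1 : l < 1) (k : ℕ) : 0 ≤ tailProb l k :=
  div_nonneg (mul_nonneg (by linarith) (pow_nonneg h0 k))
    (one_sub_pow_pos h0 h1 k.succ_ne_zero).le

lemma tailProb_le_pow (h0 : 0 ≤ l) (h1 : l < 1) (k : ℕ) : tailProb l k ≤ l ^ k := by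
  rw [tailProb, div_le_iff₀ (one_sub_pow_pos h0 h1 k.succ_ne_zero), pow_succ]
  nlinarith [mul_nonneg (pow_nonneg h0 k) h0, pow_le_one₀ (n := k) h0 h1.le]

lemma tailProb_le_inv_succ (h0 : 0 ≤ l) (h1 : l < 1) (k : ℕ) :
    tailProb l k ≤ 1 / (k + 1) := by
  have hgeom : (k + 1) * l ^ k ≤ ∑ i ∈ Finset.range (k + 1), l ^ i := by
    simpa [nsmul_eq_mul] using Finset.card_nsmul_le_sum _ _ _ fun i hi =>
      pow_le_pow_of_le_one h0 h1.le (Nat.le_of_lt_succ (Finset.mem_range.1 hi))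
  rw [tailProb, div_le_div_iff₀ (one_sub_pow_pos h0 h1 k.succ_ne_zero) (by positivity),
    ← neg_sub (l ^ (k + 1)), ← mul_geom_sum]
  nlinarith

lemma summable_tailProb (h0 : 0 ≤ l) (h1 : l < 1) : Summable (tailProb l) :=
  .of_nonneg_of_le (tailProb_nonneg h0 h1) (tailProb_le_pow h0 h1)
    (summable_geometric_of_lt_one h0 h1)

lemma one_add_mul_tailProb (h0 : 0 ≤ l) (h1 : l < 1) (k : ℕ) :
    1 + l * tailProb l k = (1 - l ^ (k + 2)) / (1 - l ^ (k + 1)) := by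
  have := (one_sub_pow_pos h0 h1 k.succ_ne_zero).ne'
  rw [tailProb]
  field_simp
  ring

lemma hasSum_log_one_add_mul_tailProb (h0 : 0 ≤ l) (h1 : l < 1) :
    HasSum (fun k => log (1 + l * tailProb l k)) (-log (1 - l)) := by
  have hmono : Monotone fun n : ℕ => log (1 - l ^ (n + 1)) := monotone_nat_of_le_succ fun n =>
    log_le_log (one_sub_pow_pos h0 h1 n.succ_ne_zero)
      (sub_le_sub_left (pow_le_pow_of_le_one h0 h1.le n.succ.le_succ) 1)
  have hlim : Tendsto (fun n : ℕ => log (1 - l ^ (n + 1))) atTop (𝓝 0) := by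
    have hpow : Tendsto (fun n : ℕ => l ^ (n + 1)) atTop (𝓝 0) :=
      (tendsto_pow_atTop_nhds_zero_of_lt_one h0 h1).comp (tendsto_add_atTop_nat 1)
    have hsub : Tendsto (fun n : ℕ => 1 - l ^ (n + 1)) atTop (𝓝 1) := by
      simpa using hpow.const_sub 1
    simpa using hsub.log one_ne_zero
  convert hasSum_sub_of_monotone hmono hlim using 1
  · funext k
    rw [one_add_mul_tailProb h0 h1,
      log_div (one_sub_pow_pos h0 h1 (by omega)).ne' (one_sub_pow_pos h0 h1 (by omega)).ne']
  · simp

lemma neg_log_one_sub_le_tsum_tailProb (h0 : 0 ≤ l) (h1 : l < 1) :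
    -log (1 - l) ≤ ∑' k, tailProb l k := by
  rw [← (hasSum_log_one_add_mul_tailProb h0 h1).tsum_eq]
  refine (hasSum_log_one_add_mul_tailProb h0 h1).summable.tsum_le_tsum (fun k => ?_)
    (summable_tailProb h0 h1)
  have hk := tailProb_nonneg h0 h1 k
  have hlog := log_le_sub_one_of_pos (by positivity : 0 < 1 + l * tailProb l k)
  nlinarith

lemma mul_tsum_tailProb_le (h0 : 0 ≤ l) (h1 : l < 1) :
    l * ∑' k, tailProb l k ≤ -log (1 - l) + ∑' k : ℕ, (1 / ((k : ℝ) + 1)) ^ 2 := by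
  have hsq : Summable fun k : ℕ => (1 / ((k : ℝ) + 1)) ^ 2 := by
    simpa [div_pow] using (summable_nat_add_iff 1).2 (summable_one_div_nat_pow.2 one_lt_two)
  have hlog := hasSum_log_one_add_mul_tailProb h0 h1
  rw [← tsum_mul_left, ← hlog.tsum_eq, ← hlog.summable.tsum_add hsq]
  refine ((summable_tailProb h0 h1).mul_left l).tsum_le_tsum (fun k => ?_) (hlog.summable.add hsq)
  have hx : 0 ≤ l * tailProb l k := mul_nonneg h0 (tailProb_nonneg h0 h1 k)
  have hle : l * tailProb l k ≤ 1 / (k + 1) :=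
    (mul_le_of_le_one_left (tailProb_nonneg h0 h1 k) h1.le).trans (tailProb_le_inv_succ h0 h1 k)
  nlinarith [sub_sq_le_log_one_add hx, pow_le_pow_left₀ hx hle 2]

end

end MaxQueueLength

open MaxQueueLength in
/-- The mean of `K`, `Ex[K] = Σ_{k≥0} (1−λ)λ^k/(1−λ^{k+1})`, is asymptotic to
`log(1/(1−λ))` as `λ → 1⁻`. -/
theorem stmt9 :
    Filter.Tendsto (fun lam : ℝ =>
        (∑' k : ℕ, (1 - lam) * lam ^ k / (1 - lam ^ (k + 1))) /
          Real.log (1 / (1 - lam)))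
      (nhdsWithin 1 (Set.Ioo 0 1)) (nhds 1) := by
  have hmem : ∀ᶠ l in 𝓝[Set.Ioo 0 1] (1 : ℝ), l ∈ Set.Ioo 0 1 := self_mem_nhdsWithin
  have hsub : Tendsto (fun l : ℝ => 1 - l) (𝓝[Set.Ioo 0 1] 1) (𝓝[>] 0) := by
    refine tendsto_nhdsWithin_iff.2 ⟨?_, hmem.mono fun l hl => sub_pos.2 hl.2⟩
    have h : Tendsto (fun l : ℝ => 1 - l) (𝓝 1) (𝓝 0) := by
      simpa using (continuous_sub_left (1 : ℝ)).tendsto 1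
    exact h.mono_left nhdsWithin_le_nhds
  have hL := (tendsto_neg_atBot_atTop.comp tendsto_log_nhdsGT_zero).comp hsub
  simp only [one_div, log_inv]
  exact tendsto_div_of_le_of_mul_le _ hL (tendsto_id.mono_left nhdsWithin_le_nhds)
    (hmem.mono fun l hl => neg_log_one_sub_le_tsum_tailProb hl.1.le hl.2)
    (hmem.mono fun l hl => mul_tsum_tailProb_le hl.1.le hl.2)
end

section
/- For 0 < λ < 1 let Ex[K] = Σ_{k≥0} (1−λ)λ^k/(1−λ^{k+1}). Then as λ → 1⁻, Ex[K] = log(1/(1−λ)) + γ + O((1−λ)·log(1/(1−λ))), where γ is the Euler–Mascheroni constant; that is, there exist constants C and λ₀ < 1 such that |Ex[K] − log(1/(1−λ)) − γ| ≤ C(1−λ)log(1/(1−λ)) for all λ₀ ≤ λ < 1. -/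
/-!
Put `λ = e^{-s}`. The `k`-th term is `(e^s - 1) / (e^{(k+1)s} - 1)`, so
`Ex[K] = (e^s - 1) · Σ_{n ≥ 1} 1 / (e^{ns} - 1)`. Split the sum at `N ≈ 1/s`. For `n ≤ N` write
`1 / (e^x - 1) = 1/x + g(x)`: the `1/x` part is `H_N / s = (log N + γ + O(1/N)) / s`, and since `g`
is increasing with values in `[-1, 0]`, `s · Σ g(ns)` is `∫ g` up to `O(s)`. For `n > N` the summand
is decreasing, so `s · Σ` is `∫_{Ns}^∞ dx / (e^x - 1)` up to `O(s)`. With the antiderivatives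
`log (1 - e^{-x}) - log x` of `g` and `log (1 - e^{-x})` of `1 / (e^x - 1)`, the two integrals add up
to `-log (Ns)` up to `O(s)`, hence `s · Σ = log (1/s) + γ + O(s)`. Finally `e^s - 1 = s + O(s²)` and
`log (1/s) = log (1/(1-λ)) + O(1-λ)`, and the factor `log (1/s) + γ` in the first correction is
what produces the `(1-λ) log (1/(1-λ))` error term.
-/

open Real Set Filter Topology MeasureTheory

theorem MonotoneOn.mul_sum_range_mem_Icc_integral {f : ℝ → ℝ} {s : ℝ} (hs : 0 < s) (M : ℕ)
    (hf : MonotoneOn f (Icc s ((M + 1) * s))) :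
    s * ∑ n ∈ Finset.range (M + 1), f ((n + 1) * s) ∈
      Icc ((∫ x in s..(M + 1) * s, f x) + s * f s)
        ((∫ x in s..(M + 1) * s, f x) + s * f ((M + 1) * s)) := by
  have hφ : MonotoneOn (fun x => f (x * s)) (Icc 1 (1 + M)) := fun x hx y hy hxy =>
    hf ⟨by nlinarith [hx.1], by nlinarith [hx.2]⟩ ⟨by nlinarith [hy.1], by nlinarith [hy.2]⟩
      (by nlinarith)
  have hint : s * ∫ x in (1 : ℝ)..1 + M, f (x * s) = ∫ x in s..(M + 1) * s, f x := by
    rw [intervalIntegral.integral_comp_mul_right f hs.ne', smul_eq_mul, ← mul_assoc,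
      mul_inv_cancel₀ hs.ne', one_mul, one_mul, add_comm (1 : ℝ)]
  have hlast : ∑ n ∈ Finset.range (M + 1), f ((n + 1) * s) =
      ∑ i ∈ Finset.range M, f ((1 + i) * s) + f ((M + 1) * s) := by
    rw [Finset.sum_range_succ]; simp only [add_comm (1 : ℝ)]
  have hfirst : ∑ n ∈ Finset.range (M + 1), f ((n + 1) * s) =
      ∑ i ∈ Finset.range M, f ((1 + ↑(i + 1)) * s) + f s := by
    rw [Finset.sum_range_succ']; push_cast; simp only [add_comm (1 : ℝ), zero_add, one_mul]
  constructor
  · rw [hfirst, mul_add]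
    linarith [mul_le_mul_of_nonneg_left hφ.integral_le_sum hs.le]
  · rw [hlast, mul_add]
    linarith [mul_le_mul_of_nonneg_left hφ.sum_le_integral hs.le]

theorem AntitoneOn.mul_tsum_mem_Icc_integral {f : ℝ → ℝ} {s : ℝ} (hs : 0 < s) (N : ℕ)
    (hf : AntitoneOn f (Ici (N * s))) (hint : IntegrableOn f (Ioi (N * s)))
    (hnonneg : ∀ x ∈ Ioi (N * s), 0 ≤ f x) :
    Summable (fun n : ℕ => f ((n + N + 1) * s)) ∧
      s * ∑' n : ℕ, f ((n + N + 1) * s) ∈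
        Icc ((∫ x in Ioi (N * s), f x) - s * f (N * s)) (∫ x in Ioi (N * s), f x) := by
  have hφ : AntitoneOn (fun x => f (x * s)) (Ici N) := fun x hx y hy hxy =>
    hf (mul_le_mul_of_nonneg_right hx hs.le) (mul_le_mul_of_nonneg_right hy hs.le)
      (mul_le_mul_of_nonneg_right hxy hs.le)
  have hφint : IntegrableOn (fun x => f (x * s)) (Ioi N) :=
    (integrableOn_Ioi_comp_mul_right_iff f _ hs).2 hint
  have hφnonneg : ∀ x ∈ Ioi (N : ℝ), 0 ≤ f (x * s) := fun x hx =>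
    hnonneg _ (mul_lt_mul_of_pos_right hx hs)
  have hI : s * ∫ x in Ioi (N : ℝ), f (x * s) = ∫ x in Ioi (N * s : ℝ), f x :=
    integral_comp_mul_right_Ioi' f _ hs
  have htail : Summable (fun n : ℕ => f (↑(n + N) * s)) :=
    (summable_nat_add_iff N).2 (hφ.summable_of_integrableOn_Ioi hφint hφnonneg)
  have hcast : ∀ n : ℕ, f (↑(n + N + 1) * s) = f ((n + N + 1) * s) := fun n => by push_cast; rfl
  have hcast' : ∀ n : ℕ, f (↑(n + 1 + N) * s) = f ((n + N + 1) * s) := fun n => by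
    push_cast; ring_nf
  have hsplit := htail.tsum_eq_zero_add
  have hupper := hφ.tsum_comp_add_le_integral N hφint hφnonneg
  have hlower := hφ.integral_le_tsum_comp_add N
    (hφ.summable_of_integrableOn_Ioi hφint hφnonneg) hφnonneg
  simp only [hcast, hcast', zero_add] at hsplit hupper
  refine ⟨?_, ?_, ?_⟩
  · simpa only [hcast'] using (summable_nat_add_iff 1).2 htail
  · have := mul_le_mul_of_nonneg_left hlower hs.le
    rw [hsplit, mul_add] at this
    linarith
  · have := mul_le_mul_of_nonneg_left hupper hs.le
    linarith

theorem harmonic_sub_log_sub_eulerMascheroniConstant_mem_Icc {N : ℕ} (hN : N ≠ 0) :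
    (harmonic N : ℝ) - log N - eulerMascheroniConstant ∈ Icc 0 (N : ℝ)⁻¹ := by
  have hupper := eulerMascheroniConstant_lt_eulerMascheroniSeq' N
  have hlower := eulerMascheroniSeq_lt_eulerMascheroniConstant N
  rw [eulerMascheroniSeq', if_neg hN] at hupper
  rw [eulerMascheroniSeq] at hlower
  have hNpos : (0 : ℝ) < N := Nat.cast_pos.2 (Nat.pos_of_ne_zero hN)
  have hgap : log (N + 1) - log N ≤ (N : ℝ)⁻¹ := by
    rw [← log_div (by positivity) hNpos.ne']
    linarith [log_le_sub_one_of_pos (x := (N + 1) / N) (by positivity),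
      show ((N : ℝ) + 1) / N = 1 + (N : ℝ)⁻¹ by field_simp]
  constructor <;> linarith

theorem exp_sub_one_pos {x : ℝ} (hx : 0 < x) : 0 < exp x - 1 :=
  sub_pos.2 (one_lt_exp_iff.2 hx)

theorem exp_sub_one_le_mul_exp (x : ℝ) : exp x - 1 ≤ x * exp x := by
  have h := add_one_le_exp (-x)
  have h1 : exp (-x) * exp x = 1 := by rw [← exp_add, neg_add_cancel, exp_zero]
  nlinarith [exp_pos x]

theorem sq_mul_exp_le_sq_exp_sub_one {x : ℝ} (hx : 0 ≤ x) : x ^ 2 * exp x ≤ (exp x - 1) ^ 2 := by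
  have hsinh : x ≤ 2 * sinh (x / 2) := by linarith [self_le_sinh_iff.2 (by linarith : 0 ≤ x / 2)]
  have hfactor : exp x - 1 = exp (x / 2) * (2 * sinh (x / 2)) := by
    rw [sinh_eq, mul_div_cancel₀ _ two_ne_zero, mul_sub, ← exp_add, ← exp_add]
    ring_nf; simp [sub_eq_neg_add]
  have hsq : exp x = exp (x / 2) ^ 2 := by rw [← exp_nat_mul]; ring_nf
  calc x ^ 2 * exp x = exp (x / 2) ^ 2 * x ^ 2 := by rw [hsq]; ring
    _ ≤ exp (x / 2) ^ 2 * (2 * sinh (x / 2)) ^ 2 := by gcongr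
    _ = (exp x - 1) ^ 2 := by rw [hfactor]; ring

theorem inv_exp_sub_one_le_inv {x : ℝ} (hx : 0 < x) : (exp x - 1)⁻¹ ≤ x⁻¹ :=
  inv_anti₀ hx (by linarith [add_one_le_exp x])

theorem neg_one_le_inv_exp_sub_one_sub_inv {x : ℝ} (hx : 0 < x) : -1 ≤ (exp x - 1)⁻¹ - x⁻¹ := by
  rw [inv_eq_one_div, inv_eq_one_div, div_sub_div _ _ (exp_sub_one_pos hx).ne' hx.ne',
    le_div_iff₀ (mul_pos (exp_sub_one_pos hx) hx)]
  linarith [exp_sub_one_le_mul_exp x]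

theorem antitoneOn_inv_exp_sub_one : AntitoneOn (fun x => (exp x - 1)⁻¹) (Ioi 0) :=
  fun _ hx _ _ hxy => inv_anti₀ (exp_sub_one_pos hx) (by linarith [exp_le_exp.2 hxy])

theorem monotoneOn_inv_exp_sub_one_sub_inv :
    MonotoneOn (fun x => (exp x - 1)⁻¹ - x⁻¹) (Ioi 0) := by
  have hderiv : ∀ x ∈ Ioi (0 : ℝ), HasDerivAt (fun x => (exp x - 1)⁻¹ - x⁻¹)
      (-exp x / (exp x - 1) ^ 2 - -(x ^ 2)⁻¹) x := fun x hx =>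
    (((hasDerivAt_exp x).sub_const 1).inv (exp_sub_one_pos hx).ne').sub
      (hasDerivAt_inv (ne_of_gt hx))
  refine monotoneOn_of_hasDerivWithinAt_nonneg (convex_Ioi 0)
    (fun x hx => (hderiv x hx).continuousAt.continuousWithinAt)
    (fun x hx => (hderiv x (interior_subset hx)).hasDerivWithinAt) fun x hx => ?_
  rw [interior_Ioi, mem_Ioi] at hx
  have hpos := exp_sub_one_pos hx
  rw [sub_neg_eq_add, neg_div, neg_add_eq_sub, sub_nonneg, div_le_iff₀ (by positivity),
    inv_mul_eq_div, le_div_iff₀ (by positivity)]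
  linarith [sq_mul_exp_le_sq_exp_sub_one (le_of_lt hx)]

theorem hasDerivAt_log_one_sub_exp_neg {x : ℝ} (hx : 0 < x) :
    HasDerivAt (fun y => log (1 - exp (-y))) (exp x - 1)⁻¹ x := by
  have hne : 1 - exp (-x) ≠ 0 := (sub_pos.2 (exp_lt_one_iff.2 (neg_lt_zero.2 hx))).ne'
  convert ((hasDerivAt_neg x).exp.const_sub 1).log hne using 1
  rw [exp_neg]
  field_simp

theorem tendsto_log_one_sub_exp_neg_atTop :
    Tendsto (fun y => log (1 - exp (-y))) atTop (𝓝 0) := by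
  have h := (tendsto_exp_neg_atTop_nhds_zero.const_sub (1 : ℝ))
  rw [sub_zero] at h
  simpa [Function.comp_def] using (continuousAt_log one_ne_zero).tendsto.comp h

theorem integrableOn_Ioi_inv_exp_sub_one {a : ℝ} (ha : 0 < a) :
    IntegrableOn (fun x => (exp x - 1)⁻¹) (Ioi a) :=
  integrableOn_Ioi_deriv_of_nonneg'
    (fun _ hx => hasDerivAt_log_one_sub_exp_neg (lt_of_lt_of_le ha hx))
    (fun _ hx => (inv_pos.2 (exp_sub_one_pos (ha.trans hx))).le) tendsto_log_one_sub_exp_neg_atTop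

theorem integral_Ioi_inv_exp_sub_one {a : ℝ} (ha : 0 < a) :
    ∫ x in Ioi a, (exp x - 1)⁻¹ = -log (1 - exp (-a)) := by
  rw [integral_Ioi_of_hasDerivAt_of_nonneg'
    (fun _ hx => hasDerivAt_log_one_sub_exp_neg (lt_of_lt_of_le ha hx))
    (fun _ hx => (inv_pos.2 (exp_sub_one_pos (ha.trans hx))).le) tendsto_log_one_sub_exp_neg_atTop,
    zero_sub]

theorem integral_inv_exp_sub_one_sub_inv {a b : ℝ} (ha : 0 < a) (hb : 0 < b) :
    ∫ x in a..b, ((exp x - 1)⁻¹ - x⁻¹) =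
      (log (1 - exp (-b)) - log b) - (log (1 - exp (-a)) - log a) := by
  have hpos : ∀ x ∈ uIcc a b, 0 < x := fun x hx => lt_of_lt_of_le (lt_min ha hb) hx.1
  refine intervalIntegral.integral_eq_sub_of_hasDerivAt (fun x hx =>
    (hasDerivAt_log_one_sub_exp_neg (hpos x hx)).sub (hasDerivAt_log (hpos x hx).ne')) ?_
  exact (ContinuousOn.intervalIntegrable fun x hx =>
    ((((continuous_exp.sub continuous_const).continuousAt.inv₀ (exp_sub_one_pos (hpos x hx)).ne').sub
      (continuousAt_inv₀ (hpos x hx).ne')).continuousWithinAt))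

theorem log_one_sub_exp_neg_sub_log_mem_Icc {s : ℝ} (hs : 0 < s) :
    log (1 - exp (-s)) - log s ∈ Icc (-s) 0 := by
  have hlt : exp (-s) < 1 := exp_lt_one_iff.2 (neg_lt_zero.2 hs)
  rw [← log_div (by linarith) hs.ne']
  constructor
  · refine (log_exp (-s)).symm.le.trans (log_le_log (exp_pos _) ?_)
    rw [le_div_iff₀ hs]
    linarith [exp_sub_one_le_mul_exp (-s)]
  · refine log_nonpos (div_nonneg (by linarith) hs.le) ((div_le_one hs).2 ?_)
    linarith [add_one_le_exp (-s)]

theorem mul_sum_range_inv_exp_sub_one {s : ℝ} (hs : s ≠ 0) (N : ℕ) :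
    s * ∑ n ∈ Finset.range N, (exp ((n + 1) * s) - 1)⁻¹ =
      harmonic N + s * ∑ n ∈ Finset.range N, ((exp ((n + 1) * s) - 1)⁻¹ - ((n + 1) * s)⁻¹) := by
  simp only [Finset.sum_sub_distrib, harmonic, mul_inv, ← Finset.sum_mul]
  push_cast
  field_simp
  ring

theorem abs_mul_tsum_inv_exp_sub_one_sub_log_sub_eulerMascheroniConstant_le {s : ℝ} (hs : 0 < s) :
    |s * ∑' n : ℕ, (exp ((n + 1) * s) - 1)⁻¹ - log s⁻¹ - eulerMascheroniConstant| ≤ 2 * s := by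
  obtain ⟨M, hM⟩ : ∃ M : ℕ, 1 ≤ (M + 1) * s :=
    ⟨⌊s⁻¹⌋₊, by rw [← inv_le_iff_one_le_mul₀ hs]; exact (Nat.lt_floor_add_one s⁻¹).le⟩
  have hN : 0 < ((M + 1 : ℕ) : ℝ) * s := by positivity
  obtain ⟨hsum, htail⟩ :=
    (antitoneOn_inv_exp_sub_one.mono (Ici_subset_Ioi.2 hN)).mul_tsum_mem_Icc_integral hs (M + 1)
      (integrableOn_Ioi_inv_exp_sub_one hN)
      (fun x hx => (inv_pos.2 (exp_sub_one_pos (hN.trans hx))).le)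
  rw [integral_Ioi_inv_exp_sub_one hN] at htail
  have hH := harmonic_sub_log_sub_eulerMascheroniConstant_mem_Icc M.add_one_ne_zero
  push_cast at hN hsum htail hH
  have hhead := (monotoneOn_inv_exp_sub_one_sub_inv.mono fun x hx =>
    lt_of_lt_of_le hs hx.1).mul_sum_range_mem_Icc_integral hs M
  rw [integral_inv_exp_sub_one_sub_inv hs hN, log_mul (by positivity) hs.ne'] at hhead
  have hsplit : ∑' n : ℕ, (exp ((n + 1) * s) - 1)⁻¹ =
      ∑ n ∈ Finset.range (M + 1), (exp ((n + 1) * s) - 1)⁻¹ +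
        ∑' n : ℕ, (exp ((n + (M + 1) + 1) * s) - 1)⁻¹ := by
    have hsum' : Summable fun n : ℕ => (exp ((n + 1) * s) - 1)⁻¹ :=
      (summable_nat_add_iff (M + 1)).1 (by push_cast; exact hsum)
    rw [← hsum'.sum_add_tsum_nat_add (M + 1)]
    push_cast
    rfl
  have hG := log_one_sub_exp_neg_sub_log_mem_Icc hs
  have hgs := mul_le_mul_of_nonneg_left (neg_one_le_inv_exp_sub_one_sub_inv hs) hs.le
  have hgN := mul_le_mul_of_nonneg_left (sub_nonpos.2 (inv_exp_sub_one_le_inv hN)) hs.le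
  have hhN := mul_le_mul_of_nonneg_left
    ((inv_exp_sub_one_le_inv hN).trans (inv_le_one_of_one_le₀ hM)) hs.le
  have hNinv : ((M : ℝ) + 1)⁻¹ ≤ s := by
    rw [inv_le_iff_one_le_mul₀ (by positivity)]; linarith
  rw [hsplit, mul_add, mul_sum_range_inv_exp_sub_one hs.ne', log_inv, abs_le]
  constructor <;> linarith [hhead.1, hhead.2, htail.1, htail.2, hH.1, hH.2, hG.1, hG.2]

theorem one_sub_mul_pow_div_one_sub_pow_succ {lam : ℝ} (h0 : 0 < lam) (h1 : lam < 1) (k : ℕ) :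
    (1 - lam) * lam ^ k / (1 - lam ^ (k + 1)) =
      (lam⁻¹ - 1) * (exp ((k + 1) * log lam⁻¹) - 1)⁻¹ := by
  have hexp : exp ((k + 1) * log lam⁻¹) = (lam ^ (k + 1))⁻¹ := by
    rw [show ((k : ℝ) + 1) = ((k + 1 : ℕ) : ℝ) by push_cast; ring, exp_nat_mul,
      exp_log (inv_pos.2 h0), inv_pow]
  have hpow : lam ^ (k + 1) < 1 := pow_lt_one₀ h0.le h1 k.succ_ne_zero
  have hpow0 : 0 < lam ^ (k + 1) := pow_pos h0 _
  rw [hexp]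
  field_simp
  ring

theorem abs_inv_sub_one_mul_sub_log_le {lam A : ℝ} (hlam : 3 / 4 ≤ lam) (hlam1 : lam < 1)
    (hA : 0 ≤ A)
    (hsA : |log lam⁻¹ * A - log (log lam⁻¹)⁻¹ - eulerMascheroniConstant| ≤ 2 * log lam⁻¹) :
    |(lam⁻¹ - 1) * A - log (1 / (1 - lam)) - eulerMascheroniConstant| ≤
      8 * (1 - lam) * log (1 / (1 - lam)) := by
  have hlam0 : 0 < lam := by linarith
  rw [one_div]
  set s := log lam⁻¹
  set t := 1 - lam
  set u := lam⁻¹ - 1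
  have ht : 0 < t := by linarith
  have hu : u = t / lam := by simp only [u, t]; field_simp
  have hut : u ≤ 4 / 3 * t := by
    rw [hu, div_le_iff₀ hlam0]; nlinarith
  have hts : t ≤ s := by
    simp only [s, t, log_inv]; linarith [log_le_sub_one_of_pos hlam0]
  have hsu : s ≤ u := log_le_sub_one_of_pos (inv_pos.2 hlam0)
  have hus : u - s ≤ u * t := by
    have : u - t = u * t := by rw [hu]; field_simp; ring
    linarith
  have hL1 : 1 ≤ log t⁻¹ := by
    rw [le_log_iff_exp_le (inv_pos.2 ht)]
    have : 4 ≤ t⁻¹ := by rw [le_inv_comm₀ (by norm_num) ht]; linarith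
    linarith [exp_one_lt_d9]
  have hlogs : log s⁻¹ ≤ log t⁻¹ := log_le_log (inv_pos.2 (ht.trans_le hts)) (inv_anti₀ ht hts)
  have hlogs' : log t⁻¹ - log s⁻¹ ≤ u := by
    rw [log_inv, log_inv, neg_sub_neg, ← log_div (ht.trans_le hts).ne' ht.ne']
    refine (log_le_sub_one_of_pos (div_pos (ht.trans_le hts) ht)).trans ?_
    have : (u + 1) * t = u := by simp only [u, t]; field_simp; ring
    rw [sub_le_iff_le_add, div_le_iff₀ ht]
    linarith
  have hγ := eulerMascheroniConstant_lt_two_thirds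
  have hsA' : s * A ≤ log t⁻¹ + 1 + 2 * s := by linarith [(abs_le.1 hsA).2]
  have hfirst : (u - s) * A ≤ 4 / 3 * t * (log t⁻¹ + 5 / 3) := calc
    (u - s) * A ≤ u * t * A := by gcongr
    _ ≤ u * (s * A) := by rw [mul_assoc]; gcongr; linarith
    _ ≤ u * (log t⁻¹ + 1 + 2 * s) := by gcongr; linarith
    _ ≤ 4 / 3 * t * (log t⁻¹ + 5 / 3) :=
      mul_le_mul hut (by linarith) (by linarith) (by positivity)
  have hdecomp : u * A - log t⁻¹ - eulerMascheroniConstant =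
      (u - s) * A + (s * A - log s⁻¹ - eulerMascheroniConstant) - (log t⁻¹ - log s⁻¹) := by ring
  rw [hdecomp, abs_le]
  constructor <;> linarith [abs_le.1 hsA, mul_nonneg (sub_nonneg.2 hsu) hA,
    le_mul_of_one_le_right ht.le hL1]

/-- As `λ → 1⁻`, `Ex[K] = log(1/(1−λ)) + γ + O((1−λ)·log(1/(1−λ)))`. -/
theorem stmt14 :
    ∃ C : ℝ, ∃ lam0 : ℝ, 0 < lam0 ∧ lam0 < 1 ∧
      ∀ lam : ℝ, lam0 ≤ lam → lam < 1 →
        |(∑' k : ℕ, (1 - lam) * lam ^ k / (1 - lam ^ (k + 1)))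
            - Real.log (1 / (1 - lam)) - Real.eulerMascheroniConstant|
          ≤ C * (1 - lam) * Real.log (1 / (1 - lam)) := by
  refine ⟨8, 3 / 4, by norm_num, by norm_num, fun lam hlam hlam1 => ?_⟩
  have hlam0 : 0 < lam := by linarith
  have hs : 0 < log lam⁻¹ := log_pos ((one_lt_inv₀ hlam0).2 hlam1)
  simp only [one_sub_mul_pow_div_one_sub_pow_succ hlam0 hlam1, tsum_mul_left]
  exact abs_inv_sub_one_mul_sub_log_le hlam hlam1
    (tsum_nonneg fun _ => (inv_pos.2 (exp_sub_one_pos (by positivity))).le)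
    (abs_mul_tsum_inv_exp_sub_one_sub_log_sub_eulerMascheroniConstant_le hs)
end

section
/- For λ > 0 and an integer l ≥ 0 define D_l(λ) = Σ_{k=0}^{l} l!/((l−k)!·λ^k). Then for all sufficiently large λ and all integers l with l ≥ λ − √λ, one has D_l(λ) ≥ l!·e^λ/(e^7·λ^l); equivalently, 1/D_l(λ) ≤ e^7·e^{−λ}·λ^l/l!. -/
/-- Stirling-type upper bound on factorial: `n! ≤ e·√n·(n/e)ⁿ` for `n ≥ 1`. -/
lemma my_factorial_le : ∀ n : ℕ, 1 ≤ n →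
    (Nat.factorial n : ℝ) ≤ Real.exp 1 * Real.sqrt n * ((n : ℝ) / Real.exp 1) ^ n := by
  rintro (_ | m) h
  · omega
  · have hmono := Stirling.stirlingSeq'_antitone (Nat.zero_le m)
    simp only [Function.comp] at hmono
    -- hmono : stirlingSeq (m+1) ≤ stirlingSeq 1  (check order)
    have h1 : Stirling.stirlingSeq (m + 1) ≤ Stirling.stirlingSeq 1 := hmono
    rw [Stirling.stirlingSeq_one] at h1
    have hdef : Stirling.stirlingSeq (m + 1)
        = (Nat.factorial (m + 1) : ℝ) /
          (Real.sqrt (2 * ((m + 1 : ℕ) : ℝ)) * (((m + 1 : ℕ) : ℝ) / Real.exp 1) ^ (m + 1)) := rfl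
    have hden : (0:ℝ) < Real.sqrt (2 * ((m + 1 : ℕ) : ℝ)) * (((m + 1 : ℕ) : ℝ) / Real.exp 1) ^ (m + 1) := by
      have : (0:ℝ) < ((m:ℝ) + 1) := by positivity
      push_cast
      positivity
    rw [hdef, div_le_iff₀ hden] at h1
    refine h1.trans (le_of_eq ?_)
    have h2 : Real.sqrt (2 * ((m + 1 : ℕ) : ℝ)) = Real.sqrt 2 * Real.sqrt ((m + 1 : ℕ) : ℝ) := by
      push_cast
      rw [← Real.sqrt_mul (by norm_num)]
    rw [h2]
    have hs2 : (Real.sqrt 2) ≠ 0 := by positivity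
    field_simp

/-- Pointwise lower bound on Poisson-type terms near the mean. -/
lemma my_term_lb (lam : ℝ) (hlam : 100 ≤ lam) (j : ℕ) (hj1 : 1 ≤ j)
    (hjle : (j : ℝ) ≤ lam) (hs : lam - (j : ℝ) ≤ 2 * Real.sqrt lam + 1) :
    Real.exp (lam - 6) / Real.sqrt lam ≤ lam ^ j / (Nat.factorial j : ℝ) := by
  have hlampos : (0:ℝ) < lam := by linarith
  have hjpos : (0:ℝ) < (j : ℝ) := by exact_mod_cast hj1
  have hsqnn := Real.sqrt_nonneg lam
  have hsq : Real.sqrt lam ^ 2 = lam := Real.sq_sqrt hlampos.le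
  have hsq10 : (10:ℝ) ≤ Real.sqrt lam := by nlinarith
  have hfact := my_factorial_le j hj1
  have e2 : (((j:ℝ)) / Real.exp 1) ^ j = Real.exp ((j:ℝ) * (Real.log j - 1)) := by
    rw [Real.exp_nat_mul, Real.exp_sub, Real.exp_log hjpos]
  have e3 : lam ^ j = Real.exp ((j:ℝ) * Real.log lam) := by
    rw [Real.exp_nat_mul, Real.exp_log hlampos]
  -- key exponent inequality
  have hlog : Real.log ((j:ℝ)/lam) ≤ (j:ℝ)/lam - 1 :=
    Real.log_le_sub_one_of_pos (by positivity)
  have hlogdiv2 : Real.log ((j:ℝ)/lam) = Real.log j - Real.log lam :=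
    Real.log_div (ne_of_gt hjpos) (ne_of_gt hlampos)
  have hmul : (j:ℝ) * (1 - (j:ℝ)/lam) ≤ (j:ℝ) * (Real.log lam - Real.log j) := by
    apply mul_le_mul_of_nonneg_left _ hjpos.le
    rw [hlogdiv2] at hlog; linarith
  have h5 : (lam - (j:ℝ))^2 ≤ 5 * lam := by
    nlinarith [sub_nonneg.mpr hjle]
  have hstep : lam - 5 - (j:ℝ) ≤ (j:ℝ) * (1 - (j:ℝ)/lam) := by
    have hexp : (j:ℝ) * (1 - (j:ℝ)/lam) = ((j:ℝ)*lam - (j:ℝ)^2)/lam := by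
      field_simp
    rw [hexp, le_div_iff₀ hlampos]
    nlinarith [h5]
  have harith : lam - 6 + (1 + (j:ℝ)*(Real.log j - 1)) ≤ (j:ℝ) * Real.log lam := by
    have h6 := hstep.trans hmul
    rw [mul_sub] at h6
    nlinarith [h6]
  have key : Real.exp (lam - 6) * (Real.exp 1 * Real.sqrt j * (((j:ℝ)) / Real.exp 1) ^ j)
      ≤ lam ^ j * Real.sqrt lam := by
    have h1 : Real.exp (lam - 6) * (Real.exp 1 * (((j:ℝ)) / Real.exp 1) ^ j) ≤ lam ^ j := by
      rw [e2, e3, ← Real.exp_add, ← Real.exp_add]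
      exact Real.exp_le_exp.mpr (by linarith [harith])
    have h2 : Real.sqrt j ≤ Real.sqrt lam := Real.sqrt_le_sqrt hjle
    calc Real.exp (lam - 6) * (Real.exp 1 * Real.sqrt j * (((j:ℝ)) / Real.exp 1) ^ j)
        = (Real.exp (lam - 6) * (Real.exp 1 * (((j:ℝ)) / Real.exp 1) ^ j)) * Real.sqrt j := by
          ring
      _ ≤ lam ^ j * Real.sqrt lam := by
          apply mul_le_mul h1 h2 (Real.sqrt_nonneg _) (by positivity)
  calc Real.exp (lam - 6) / Real.sqrt lam
      ≤ lam ^ j / (Real.exp 1 * Real.sqrt j * (((j:ℝ)) / Real.exp 1) ^ j) := by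
        rw [div_le_div_iff₀ (by positivity) (by positivity)]
        exact key
    _ ≤ lam ^ j / (Nat.factorial j : ℝ) := by
        gcongr


/-- `D_l(λ) = Σ_{k=0}^{l} l!/((l−k)!·λ^k)`, the reciprocal of the Erlang loss
probability `Pr[L > l]` for `M/M/∞` with ranked servers. -/
noncomputable def erlangD (l : ℕ) (lam : ℝ) : ℝ :=
  ∑ k ∈ Finset.range (l + 1), (Nat.factorial l : ℝ) / ((Nat.factorial (l - k) : ℝ) * lam ^ k)

/-- Tail estimate: for all sufficiently large `λ` and all integers
`l ≥ λ − √λ`, one has `D_l(λ) ≥ l!·e^λ/(e^7·λ^l)`, equivalently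
`1/D_l(λ) ≤ e^7·e^{−λ}·λ^l/l!`. -/
theorem stmt17 :
    ∃ lam0 : ℝ, ∀ lam : ℝ, lam0 ≤ lam → ∀ l : ℕ, lam - Real.sqrt lam ≤ (l : ℝ) →
      (Nat.factorial l : ℝ) * Real.exp lam / (Real.exp 7 * lam ^ l) ≤ erlangD l lam ∧
      1 / erlangD l lam ≤ Real.exp 7 * Real.exp (-lam) * lam ^ l / (Nat.factorial l : ℝ) := by
  refine ⟨100, fun lam hlam l hl => ?_⟩
  have hlampos : (0:ℝ) < lam := by linarith
  have hsqnn := Real.sqrt_nonneg lam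
  have hsq : Real.sqrt lam ^ 2 = lam := Real.sq_sqrt hlampos.le
  have hsq10 : (10:ℝ) ≤ Real.sqrt lam := by nlinarith
  set t := Nat.floor (Real.sqrt lam) with ht
  set a := Nat.floor lam - 2 * t with ha
  have htle : (t:ℝ) ≤ Real.sqrt lam := Nat.floor_le hsqnn
  have htgt : Real.sqrt lam - 1 < (t:ℝ) := Nat.sub_one_lt_floor _
  have h2t : 2 * t ≤ Nat.floor lam := by
    apply Nat.le_floor
    push_cast
    nlinarith
  have hacast : (a:ℝ) = (Nat.floor lam : ℝ) - 2*(t:ℝ) := by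
    rw [ha]; push_cast [h2t]; ring
  have hfl : lam - 1 < (Nat.floor lam : ℝ) := Nat.sub_one_lt_floor lam
  have hfl2 : (Nat.floor lam : ℝ) ≤ lam := Nat.floor_le hlampos.le
  have halow : lam - 1 - 2*Real.sqrt lam ≤ (a:ℝ) := by rw [hacast]; linarith
  have hahigh : (a:ℝ) + t ≤ lam - Real.sqrt lam + 1 := by rw [hacast]; linarith
  have hsub : Finset.Ico a (a+t) ⊆ Finset.range (l+1) := by
    intro j hj
    rw [Finset.mem_Ico] at hj
    rw [Finset.mem_range]
    have hc : (j:ℝ) < (a:ℝ) + t := by exact_mod_cast hj.2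
    have : (j:ℝ) < (l:ℝ) + 1 := by linarith
    exact_mod_cast this
  -- bound each term
  have hterm : ∀ j ∈ Finset.Ico a (a+t),
      Real.exp (lam - 6) / Real.sqrt lam ≤ lam ^ j / (Nat.factorial j : ℝ) := by
    intro j hj
    rw [Finset.mem_Ico] at hj
    have hcl : (a:ℝ) ≤ (j:ℝ) := by exact_mod_cast hj.1
    have hcu : (j:ℝ) < (a:ℝ) + t := by exact_mod_cast hj.2
    have hjr : lam - 1 - 2*Real.sqrt lam ≤ (j:ℝ) := by linarith
    have hj1 : 1 ≤ j := by
      have : (1:ℝ) ≤ (j:ℝ) := by nlinarith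
      exact_mod_cast this
    have hjle : (j:ℝ) ≤ lam := by linarith
    exact my_term_lb lam hlam j hj1 hjle (by linarith)
  have hsum1 : (t:ℝ) * (Real.exp (lam - 6) / Real.sqrt lam)
      ≤ ∑ j ∈ Finset.Ico a (a+t), lam ^ j / (Nat.factorial j : ℝ) := by
    calc (t:ℝ) * (Real.exp (lam - 6) / Real.sqrt lam)
        = ∑ _j ∈ Finset.Ico a (a+t), Real.exp (lam - 6) / Real.sqrt lam := by
          rw [Finset.sum_const, Nat.card_Ico, Nat.add_sub_cancel_left, nsmul_eq_mul]
      _ ≤ _ := Finset.sum_le_sum hterm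
  have hsum2 : ∑ j ∈ Finset.Ico a (a+t), lam ^ j / (Nat.factorial j : ℝ)
      ≤ ∑ j ∈ Finset.range (l+1), lam ^ j / (Nat.factorial j : ℝ) :=
    Finset.sum_le_sum_of_subset_of_nonneg hsub (fun i _ _ => by positivity)
  have hinit : Real.exp lam / Real.exp 7 ≤ (t:ℝ) * (Real.exp (lam - 6) / Real.sqrt lam) := by
    have he : (2:ℝ) ≤ Real.exp 1 := by
      have := Real.add_one_le_exp 1; linarith
    have h1 : Real.sqrt lam ≤ (t:ℝ) * Real.exp 1 := by
      nlinarith [mul_nonneg (by linarith : (0:ℝ) ≤ Real.exp 1 - 2) (Nat.cast_nonneg t)]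
    have hEE : Real.exp (lam - 6) = Real.exp (lam - 7) * Real.exp 1 := by
      rw [← Real.exp_add]; ring_nf
    rw [← Real.exp_sub, ← mul_div_assoc, le_div_iff₀ (Real.sqrt_pos.mpr hlampos), hEE]
    nlinarith [Real.exp_pos (lam - 7), h1]
  have hSfull : Real.exp lam / Real.exp 7 ≤ ∑ j ∈ Finset.range (l+1), lam ^ j / (Nat.factorial j : ℝ) :=
    hinit.trans (hsum1.trans hsum2)
  -- identity for erlangD
  have hid : erlangD l lam
      = (Nat.factorial l : ℝ) / lam ^ l * ∑ j ∈ Finset.range (l+1), lam ^ j / (Nat.factorial j : ℝ) := by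
    rw [erlangD, Finset.mul_sum,
      ← Finset.sum_range_reflect (fun j => (Nat.factorial l : ℝ)/lam^l * (lam^j/(Nat.factorial j : ℝ))) (l+1)]
    apply Finset.sum_congr rfl
    intro k hk
    rw [Finset.mem_range] at hk
    have hkl : k ≤ l := Nat.lt_succ_iff.mp hk
    have hred : l + 1 - 1 - k = l - k := by omega
    simp only [hred]
    have hpow : lam ^ (l - k) * lam ^ k = lam ^ l := by
      rw [← pow_add]; congr 1; omega
    have hne1 : lam ^ k ≠ 0 := by positivity
    have hne2 : lam ^ l ≠ 0 := by positivity
    have hne3 : (Nat.factorial (l-k) : ℝ) ≠ 0 := by positivity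
    field_simp
    linear_combination (-1 : ℝ) * hpow
  have hfacpos : (0:ℝ) < (Nat.factorial l : ℝ) := by exact_mod_cast Nat.factorial_pos l
  have hpowpos : (0:ℝ) < lam ^ l := by positivity
  have main1 : (Nat.factorial l : ℝ) * Real.exp lam / (Real.exp 7 * lam ^ l) ≤ erlangD l lam := by
    rw [hid]
    calc (Nat.factorial l : ℝ) * Real.exp lam / (Real.exp 7 * lam ^ l)
        = ((Nat.factorial l : ℝ) / lam ^ l) * (Real.exp lam / Real.exp 7) := by ring
      _ ≤ _ := mul_le_mul_of_nonneg_left hSfull (le_of_lt (div_pos hfacpos hpowpos))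
  refine ⟨main1, ?_⟩
  have hBpos : 0 < (Nat.factorial l : ℝ) * Real.exp lam / (Real.exp 7 * lam ^ l) := by positivity
  have h2 : 1 / erlangD l lam
      ≤ 1 / ((Nat.factorial l : ℝ) * Real.exp lam / (Real.exp 7 * lam ^ l)) :=
    one_div_le_one_div_of_le hBpos main1
  refine h2.trans (le_of_eq ?_)
  rw [Real.exp_neg]
  field_simp
end
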